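/- arXiv:2106.04233 — 11 statements merged into one kernel-verified Lean document; each statement's English description precedes it below -/
import Mathlib

section
/- Let A : [0,1]² → [0,1] be an aggregation function and let IA = Â be its best interval representation. Then the function 𝔏(IA) : [0,1]² → [0,1] defined by 𝔏(IA)(ε, δ) = sup{ w(IA([u, u+ε], [v, v+δ])) : u ∈ [0, 1−ε], v ∈ [0, 1−δ] } is the least width-limiting function for IA, and moreover 𝔏(IA) is itself an aggregation function (it is increasing in each argument, 𝔏(IA)(0,0) = 0 and 𝔏(IA)(1,1) = 1). -/
open Set

noncomputable section

structure IV : Type where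
  lo : ℝ
  hi : ℝ
  lo_mem : lo ∈ Set.Icc (0:ℝ) 1
  hi_mem : hi ∈ Set.Icc (0:ℝ) 1
  lo_le_hi : lo ≤ hi

namespace IV

/-- The width of an interval. -/
def w (X : IV) : ℝ := X.hi - X.lo

/-- The product (componentwise) order on intervals. -/
def lePr (X Y : IV) : Prop := X.lo ≤ Y.lo ∧ X.hi ≤ Y.hi

end IV

/-- `F` maps `[0,1]²` into `[0,1]`. -/
def MapsIcc (F : ℝ → ℝ → ℝ) : Prop :=
  ∀ x ∈ Set.Icc (0:ℝ) 1, ∀ y ∈ Set.Icc (0:ℝ) 1, F x y ∈ Set.Icc (0:ℝ) 1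

/-- `F` is increasing in each argument on `[0,1]²`. -/
def IncrIcc (F : ℝ → ℝ → ℝ) : Prop :=
  ∀ x₁ ∈ Set.Icc (0:ℝ) 1, ∀ x₂ ∈ Set.Icc (0:ℝ) 1, ∀ y₁ ∈ Set.Icc (0:ℝ) 1, ∀ y₂ ∈ Set.Icc (0:ℝ) 1,
    x₁ ≤ x₂ → y₁ ≤ y₂ → F x₁ y₁ ≤ F x₂ y₂

/-- Aggregation function on `[0,1]²`. -/
def IsAggregation (A : ℝ → ℝ → ℝ) : Prop :=
  MapsIcc A ∧ IncrIcc A ∧ A 0 0 = 0 ∧ A 1 1 = 1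

/-- The dual of a function with respect to the Zadeh negation. -/
def dualF (F : ℝ → ℝ → ℝ) : ℝ → ℝ → ℝ := fun x y => 1 - F (1 - x) (1 - y)

/-- Ultramodularity of a bivariate function on `[0,1]²`. -/
def Ultramodular (A : ℝ → ℝ → ℝ) : Prop :=
  ∀ x₁ ∈ Set.Icc (0:ℝ) 1, ∀ x₂ ∈ Set.Icc (0:ℝ) 1, ∀ y₁ ∈ Set.Icc (0:ℝ) 1, ∀ y₂ ∈ Set.Icc (0:ℝ) 1,
    ∀ ε ∈ Set.Icc (0:ℝ) 1, ∀ δ ∈ Set.Icc (0:ℝ) 1,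
      x₂ + ε ∈ Set.Icc (0:ℝ) 1 → y₂ + δ ∈ Set.Icc (0:ℝ) 1 → x₁ ≤ x₂ → y₁ ≤ y₂ →
        A (x₁ + ε) (y₁ + δ) - A x₁ y₁ ≤ A (x₂ + ε) (y₂ + δ) - A x₂ y₂

/-- `(a,b)`-ultramodularity of a bivariate function on `[0,1]²`. -/
def ABUltramodular (A : ℝ → ℝ → ℝ) (a b : ℝ) : Prop :=
  ∀ x ∈ Set.Icc (0:ℝ) 1, ∀ y ∈ Set.Icc (0:ℝ) 1, ∀ ε ∈ Set.Icc (0:ℝ) 1, ∀ δ ∈ Set.Icc (0:ℝ) 1,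
    x + ε ∈ Set.Icc (0:ℝ) 1 → y + δ ∈ Set.Icc (0:ℝ) 1 →
    a - ε ∈ Set.Icc (0:ℝ) 1 → b - δ ∈ Set.Icc (0:ℝ) 1 →
      A (x + ε) (y + δ) - A x y ≤ A a b - A (a - ε) (b - δ)

/-- `𝔏(IF)(ε,δ)`: the supremum of the widths `w(IF(X,Y))` over all intervals `X` of width `ε`
and `Y` of width `δ` (which are exactly the intervals `[u,u+ε]`, `u ∈ [0,1-ε]`, and
`[v,v+δ]`, `v ∈ [0,1-δ]`). -/
def Lwl (IF : IV → IV → IV) (ε δ : ℝ) : ℝ :=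
  sSup {t : ℝ | ∃ X Y : IV, X.w = ε ∧ Y.w = δ ∧ t = (IF X Y).w}

/-- `IF` is width-limited by `B`. -/
def WidthLimited (IF : IV → IV → IV) (B : ℝ → ℝ → ℝ) : Prop :=
  ∀ X Y : IV, (IF X Y).w ≤ B X.w Y.w

/-- Overlap function on `[0,1]²`. -/
def IsOverlap (O : ℝ → ℝ → ℝ) : Prop :=
  MapsIcc O ∧
  (∀ x ∈ Set.Icc (0:ℝ) 1, ∀ y ∈ Set.Icc (0:ℝ) 1, O x y = O y x) ∧
  (∀ x ∈ Set.Icc (0:ℝ) 1, ∀ y ∈ Set.Icc (0:ℝ) 1, (O x y = 0 ↔ x * y = 0)) ∧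
  (∀ x ∈ Set.Icc (0:ℝ) 1, ∀ y ∈ Set.Icc (0:ℝ) 1, (O x y = 1 ↔ x * y = 1)) ∧
  IncrIcc O ∧
  ContinuousOn (fun p : ℝ × ℝ => O p.1 p.2) (Set.Icc (0:ℝ) 1 ×ˢ Set.Icc (0:ℝ) 1)

/-- Strict overlap function. -/
def IsStrictOverlap (O : ℝ → ℝ → ℝ) : Prop :=
  IsOverlap O ∧
  ∀ x ∈ Set.Ioc (0:ℝ) 1, ∀ y ∈ Set.Ioc (0:ℝ) 1, ∀ z ∈ Set.Ioc (0:ℝ) 1, (x < y ↔ O x z < O y z)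

/-- `K_α(x,y) = x + α (y - x)`. -/
def Kab (α x y : ℝ) : ℝ := x + α * (y - x)

/-- `K_α` of an interval: `K_α(X) = K_α(X⁻, X⁺)`. -/
def KI (α : ℝ) (X : IV) : ℝ := X.lo + α * (X.hi - X.lo)

/-- The admissible order `≤_{α,β}` generated by `(K_α, K_β)`. -/
def leAB (α β : ℝ) (X Y : IV) : Prop :=
  KI α X < KI α Y ∨ (KI α X = KI α Y ∧ KI β X ≤ KI β Y)

/-- Width-limited interval-valued overlap function with respect to `(le1, le2, B)`. -/
def IsWIVOverlap (IOw : IV → IV → IV) (le1 le2 : IV → IV → Prop) (B : ℝ → ℝ → ℝ) : Prop :=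
  (∀ X Y : IV, IOw X Y = IOw Y X) ∧
  (∀ X Y : IV, ((IOw X Y).lo = 0 ∧ (IOw X Y).hi = 0) ↔ (X.lo * Y.lo = 0 ∧ X.hi * Y.hi = 0)) ∧
  (∀ X Y : IV, ((IOw X Y).lo = 1 ∧ (IOw X Y).hi = 1) ↔ (X.lo * Y.lo = 1 ∧ X.hi * Y.hi = 1)) ∧
  (∀ X₁ X₂ Y₁ Y₂ : IV, le1 X₁ X₂ → le1 Y₁ Y₂ → le2 (IOw X₁ Y₁) (IOw X₂ Y₂)) ∧
  (∀ X Y : IV, (IOw X Y).w ≤ B X.w Y.w)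

/-- `d_α(c)`: the maximal possible width of an interval `Z` with `K_α(Z) = c`. -/
def dmax (α c : ℝ) : ℝ := min (c / α) ((1 - c) / (1 - α))

/-- `λ_α(X) = w(X) / d_α(K_α(X))`, with the convention `0/0 = 1`. -/
def lam (α : ℝ) (X : IV) : ℝ :=
  if dmax α (KI α X) = 0 then 1 else X.w / dmax α (KI α X)


lemma iv_exists_wider (X : IV) (ε : ℝ) (hXw : X.w ≤ ε) (hε : ε ≤ 1) :
    ∃ X' : IV, X'.w = ε ∧ X'.lo ≤ X.lo ∧ X.hi ≤ X'.hi := by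
  have hw : 0 ≤ X.w := sub_nonneg.2 X.lo_le_hi
  have hε0 : 0 ≤ ε := le_trans hw hXw
  have hlo0 : 0 ≤ X.lo := X.lo_mem.1
  have hhi1 : X.hi ≤ 1 := X.hi_mem.2
  refine ⟨⟨min X.lo (1 - ε), min X.lo (1 - ε) + ε, ⟨?_, ?_⟩, ⟨?_, ?_⟩, ?_⟩, ?_, ?_, ?_⟩
  · exact le_min hlo0 (by linarith)
  · exact le_trans (min_le_right _ _) (by linarith)
  · have := le_min hlo0 (by linarith : (0:ℝ) ≤ 1 - ε); linarith
  · have := min_le_right X.lo (1 - ε); linarith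
  · linarith
  · simp [IV.w]
  · exact min_le_left _ _
  · show X.hi ≤ min X.lo (1 - ε) + ε
    have hXw' : X.hi - X.lo ≤ ε := hXw
    rcases min_cases X.lo (1 - ε) with ⟨h, _⟩ | ⟨h, _⟩ <;> rw [h] <;> linarith

theorem statement2 (A : ℝ → ℝ → ℝ) (hA : IsAggregation A) (IA : IV → IV → IV)
    (hIA : ∀ X Y : IV, (IA X Y).lo = A X.lo Y.lo ∧ (IA X Y).hi = A X.hi Y.hi) :
    (WidthLimited IA (Lwl IA) ∧
      ∀ B : ℝ → ℝ → ℝ, WidthLimited IA B →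
        ∀ ε ∈ Set.Icc (0:ℝ) 1, ∀ δ ∈ Set.Icc (0:ℝ) 1, Lwl IA ε δ ≤ B ε δ) ∧
    IsAggregation (Lwl IA) := by
  obtain ⟨hM, hI, h00, h11⟩ := hA
  set S : ℝ → ℝ → Set ℝ :=
    fun ε δ => {t : ℝ | ∃ X Y : IV, X.w = ε ∧ Y.w = δ ∧ t = (IA X Y).w} with hS
  have hLwl : ∀ ε δ, Lwl IA ε δ = sSup (S ε δ) := fun _ _ => rfl
  have hwval : ∀ X Y : IV, (IA X Y).w = A X.hi Y.hi - A X.lo Y.lo := by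
    intro X Y; rw [IV.w, (hIA X Y).1, (hIA X Y).2]
  have hle1 : ∀ t ∈ S 0 0 ∪ S 1 1 ∪ {t | ∃ ε δ, t ∈ S ε δ}, True := fun _ _ => trivial
  have hub : ∀ ε δ, ∀ t ∈ S ε δ, t ≤ 1 := by
    rintro ε δ t ⟨X, Y, _, _, rfl⟩
    rw [hwval]
    have h1 := (hM X.hi X.hi_mem Y.hi Y.hi_mem).2
    have h2 := (hM X.lo X.lo_mem Y.lo Y.lo_mem).1
    linarith
  have hbdd : ∀ ε δ, BddAbove (S ε δ) := fun ε δ => ⟨1, fun t ht => hub ε δ t ht⟩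
  have hnn : ∀ X Y : IV, 0 ≤ (IA X Y).w := by
    intro X Y; rw [hwval]
    have := hI X.lo X.lo_mem X.hi X.hi_mem Y.lo Y.lo_mem Y.hi Y.hi_mem X.lo_le_hi Y.lo_le_hi
    linarith
  have hmk : ∀ ε ∈ Set.Icc (0:ℝ) 1, ∃ X : IV, X.w = ε := by
    intro ε hε
    exact ⟨⟨0, ε, ⟨le_refl 0, zero_le_one⟩, hε, hε.1⟩, by simp [IV.w]⟩
  have hWL : WidthLimited IA (Lwl IA) := by
    intro X Y
    exact le_csSup (hbdd _ _) ⟨X, Y, rfl, rfl, rfl⟩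
  refine ⟨⟨hWL, ?_⟩, ?_, ?_, ?_, ?_⟩
  · -- minimality
    intro B hB ε hε δ hδ
    obtain ⟨X, hX⟩ := hmk ε hε
    obtain ⟨Y, hY⟩ := hmk δ hδ
    have h0B : (0:ℝ) ≤ B ε δ := by
      have := hB X Y; rw [hX, hY] at this
      exact le_trans (hnn X Y) this
    refine Real.sSup_le ?_ h0B
    rintro t ⟨X, Y, rfl, rfl, rfl⟩
    exact hB X Y
  · -- MapsIcc
    intro ε hε δ hδ
    obtain ⟨X, hX⟩ := hmk ε hε
    obtain ⟨Y, hY⟩ := hmk δ hδ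
    constructor
    · exact le_trans (hnn X Y) (le_csSup (hbdd _ _) ⟨X, Y, hX, hY, rfl⟩)
    · exact Real.sSup_le (hub ε δ) zero_le_one
  · -- IncrIcc
    intro ε₁ hε₁ ε₂ hε₂ δ₁ hδ₁ δ₂ hδ₂ hε hδ
    obtain ⟨X₀, hX₀⟩ := hmk ε₂ hε₂
    obtain ⟨Y₀, hY₀⟩ := hmk δ₂ hδ₂
    have h0 : (0:ℝ) ≤ Lwl IA ε₂ δ₂ :=
      le_trans (hnn X₀ Y₀) (le_csSup (hbdd _ _) ⟨X₀, Y₀, hX₀, hY₀, rfl⟩)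
    refine Real.sSup_le ?_ h0
    rintro t ⟨X, Y, rfl, rfl, rfl⟩
    obtain ⟨X', hX'w, hX'lo, hX'hi⟩ := iv_exists_wider X ε₂ hε hε₂.2
    obtain ⟨Y', hY'w, hY'lo, hY'hi⟩ := iv_exists_wider Y δ₂ hδ hδ₂.2
    have hle : (IA X Y).w ≤ (IA X' Y').w := by
      rw [hwval, hwval]
      have h1 := hI X.hi X.hi_mem X'.hi X'.hi_mem Y.hi Y.hi_mem Y'.hi Y'.hi_mem hX'hi hY'hi
      have h2 := hI X'.lo X'.lo_mem X.lo X.lo_mem Y'.lo Y'.lo_mem Y.lo Y.lo_mem hX'lo hY'lo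
      linarith
    exact le_trans hle (le_csSup (hbdd _ _) ⟨X', Y', hX'w, hY'w, rfl⟩)
  · -- Lwl 0 0 = 0
    have hsub : ∀ t ∈ S 0 0, t ≤ 0 := by
      rintro t ⟨X, Y, hX, hY, rfl⟩
      have hX' : X.hi = X.lo := by have : X.hi - X.lo = 0 := hX; linarith
      have hY' : Y.hi = Y.lo := by have : Y.hi - Y.lo = 0 := hY; linarith
      rw [hwval, hX', hY']; linarith
    obtain ⟨X, hX⟩ := hmk 0 ⟨le_refl 0, zero_le_one⟩
    have hge : (0:ℝ) ≤ Lwl IA 0 0 :=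
      le_trans (hnn X X) (le_csSup (hbdd _ _) ⟨X, X, hX, hX, rfl⟩)
    exact le_antisymm (Real.sSup_le hsub (le_refl 0)) hge
  · -- Lwl 1 1 = 1
    have hmem : (1:ℝ) ∈ S 1 1 := by
      refine ⟨⟨0, 1, ⟨le_refl 0, zero_le_one⟩, ⟨zero_le_one, le_refl 1⟩, zero_le_one⟩,
        ⟨0, 1, ⟨le_refl 0, zero_le_one⟩, ⟨zero_le_one, le_refl 1⟩, zero_le_one⟩,
        by simp [IV.w], by simp [IV.w], ?_⟩
      rw [hwval]; simp only []; rw [h11, h00]; ring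
    exact le_antisymm (Real.sSup_le (hub 1 1) zero_le_one) (le_csSup (hbdd _ _) hmem)
end
end

section
/- Let A : [0,1]² → [0,1] be an aggregation function, and let 𝔏(Â) and 𝔏(Â^d) denote the least width-limiting functions of the best interval representations Â and Â^d respectively, where 𝔏(IF)(ε, δ) = sup{ w(IF([u, u+ε], [v, v+δ])) : u ∈ [0, 1−ε], v ∈ [0, 1−δ] }. Then 𝔏(Â) = 𝔏(Â^d) = A^d (pointwise equality of functions on [0,1]²) if and only if A is a (1,1)-ultramodular aggregation function. -/
open Set

noncomputable section

/-!
Reflecting intervals through `1/2` (`X ↦ 1 - X`) preserves widths and turns the widths of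
`Â^d` into those of `Â`, so `𝔏(Â^d) = 𝔏(Â)`. On `[1-ε, 1] × [1-δ, 1]` the width of `Â` is
`A(1,1) - A(1-ε, 1-δ) = A^d(ε, δ)`, so `𝔏(Â) = A^d` exactly when `A^d` bounds every width of `Â`;
since `A(1,1) = 1`, that bound is exactly the `(1,1)`-ultramodularity inequality.
-/

/-- `IF` is the best interval representation `F̂` of `F`. -/
def IsBestRep (F : ℝ → ℝ → ℝ) (IF : IV → IV → IV) : Prop :=
  ∀ X Y : IV, (IF X Y).lo = F X.lo Y.lo ∧ (IF X Y).hi = F X.hi Y.hi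

namespace IV

lemma w_mem (X : IV) : X.w ∈ Icc (0:ℝ) 1 := by
  have := X.lo_mem; have := X.hi_mem; have := X.lo_le_hi
  simp only [w, mem_Icc] at *
  constructor <;> linarith

lemma lo_add_w (X : IV) : X.lo + X.w = X.hi := by
  simp only [w]; ring

def reflect (X : IV) : IV where
  lo := 1 - X.hi
  hi := 1 - X.lo
  lo_mem := by have := X.hi_mem; simp only [mem_Icc] at *; constructor <;> linarith
  hi_mem := by have := X.lo_mem; simp only [mem_Icc] at *; constructor <;> linarith
  lo_le_hi := by linarith [X.lo_le_hi]

@[simp]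
lemma reflect_reflect (X : IV) : X.reflect.reflect = X := by
  cases X; simp [reflect]

@[simp]
lemma w_reflect (X : IV) : X.reflect.w = X.w := by
  simp only [w, reflect]; ring

end IV

lemma IsBestRep.w_eq {F : ℝ → ℝ → ℝ} {IF : IV → IV → IV} (h : IsBestRep F IF) (X Y : IV) :
    (IF X Y).w = F X.hi Y.hi - F X.lo Y.lo := by
  rw [IV.w, (h X Y).1, (h X Y).2]

lemma IsBestRep.w_dualF_eq {A : ℝ → ℝ → ℝ} {IA IAd : IV → IV → IV} (hIA : IsBestRep A IA)
    (hIAd : IsBestRep (dualF A) IAd) (X Y : IV) :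
    (IAd X Y).w = (IA X.reflect Y.reflect).w := by
  simp only [hIAd.w_eq, hIA.w_eq, dualF, IV.reflect]
  ring

lemma bddAbove_widths (IF : IV → IV → IV) (ε δ : ℝ) :
    BddAbove {t : ℝ | ∃ X Y : IV, X.w = ε ∧ Y.w = δ ∧ t = (IF X Y).w} :=
  ⟨1, by rintro _ ⟨X, Y, -, -, rfl⟩; exact (IF X Y).w_mem.2⟩

lemma w_le_Lwl (IF : IV → IV → IV) (X Y : IV) : (IF X Y).w ≤ Lwl IF X.w Y.w :=
  le_csSup (bddAbove_widths IF X.w Y.w) ⟨X, Y, rfl, rfl, rfl⟩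

lemma Lwl_eq_of_w_eq_reflect {IF IG : IV → IV → IV}
    (h : ∀ X Y : IV, (IG X Y).w = (IF X.reflect Y.reflect).w) : Lwl IG = Lwl IF := by
  funext ε δ
  show sSup _ = sSup _
  congr 1
  ext t
  constructor
  · rintro ⟨X, Y, rfl, rfl, rfl⟩
    exact ⟨X.reflect, Y.reflect, X.w_reflect, Y.w_reflect, h X Y⟩
  · rintro ⟨X, Y, rfl, rfl, rfl⟩
    exact ⟨X.reflect, Y.reflect, X.w_reflect, Y.w_reflect, by simp [h]⟩

lemma Lwl_eq_iff_widthLimited {IF : IV → IV → IV} {B : ℝ → ℝ → ℝ}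
    (hB : ∀ ε ∈ Icc (0:ℝ) 1, ∀ δ ∈ Icc (0:ℝ) 1,
      ∃ X Y : IV, X.w = ε ∧ Y.w = δ ∧ (IF X Y).w = B ε δ) :
    (∀ ε ∈ Icc (0:ℝ) 1, ∀ δ ∈ Icc (0:ℝ) 1, Lwl IF ε δ = B ε δ) ↔ WidthLimited IF B := by
  constructor
  · intro h X Y
    exact (w_le_Lwl IF X Y).trans_eq (h _ X.w_mem _ Y.w_mem)
  · intro hW ε hε δ hδ
    obtain ⟨X, Y, rfl, rfl, hXY⟩ := hB ε hε δ hδ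
    refine IsGreatest.csSup_eq ⟨⟨X, Y, rfl, rfl, hXY.symm⟩, ?_⟩
    rintro _ ⟨X', Y', hX', hY', rfl⟩
    exact hX' ▸ hY' ▸ hW X' Y'

section BestRep

variable {A : ℝ → ℝ → ℝ} {IA : IV → IV → IV}

lemma exists_w_eq_dualF (hIA : IsBestRep A IA) (h11 : A 1 1 = 1)
    (ε : ℝ) (hε : ε ∈ Icc (0:ℝ) 1) (δ : ℝ) (hδ : δ ∈ Icc (0:ℝ) 1) :
    ∃ X Y : IV, X.w = ε ∧ Y.w = δ ∧ (IA X Y).w = dualF A ε δ := by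
  have one_mem : (1:ℝ) ∈ Icc (0:ℝ) 1 := right_mem_Icc.2 zero_le_one
  refine ⟨⟨1 - ε, 1, Icc.one_sub_mem hε, one_mem, by linarith [hε.1]⟩,
    ⟨1 - δ, 1, Icc.one_sub_mem hδ, one_mem, by linarith [hδ.1]⟩, ?_, ?_, ?_⟩
  · simp [IV.w]
  · simp [IV.w]
  · simp [hIA.w_eq, dualF, h11]

lemma widthLimited_dualF_iff (hIA : IsBestRep A IA) (h11 : A 1 1 = 1) :
    WidthLimited IA (dualF A) ↔ ABUltramodular A 1 1 := by
  constructor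
  · intro hW x hx y hy ε hε δ hδ hxε hyδ _ _
    have := hW ⟨x, x + ε, hx, hxε, by linarith [hε.1]⟩ ⟨y, y + δ, hy, hyδ, by linarith [hδ.1]⟩
    rw [hIA.w_eq] at this
    simpa [IV.w, dualF, h11] using this
  · intro hU X Y
    have := hU X.lo X.lo_mem Y.lo Y.lo_mem X.w X.w_mem Y.w Y.w_mem
      (X.lo_add_w ▸ X.hi_mem) (Y.lo_add_w ▸ Y.hi_mem)
      (Icc.one_sub_mem X.w_mem) (Icc.one_sub_mem Y.w_mem)
    rwa [X.lo_add_w, Y.lo_add_w, h11, ← hIA.w_eq] at this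

end BestRep

theorem statement5 (A : ℝ → ℝ → ℝ) (hA : IsAggregation A)
    (IA IAd : IV → IV → IV)
    (hIA : ∀ X Y : IV, (IA X Y).lo = A X.lo Y.lo ∧ (IA X Y).hi = A X.hi Y.hi)
    (hIAd : ∀ X Y : IV,
      (IAd X Y).lo = dualF A X.lo Y.lo ∧ (IAd X Y).hi = dualF A X.hi Y.hi) :
    (∀ ε ∈ Set.Icc (0:ℝ) 1, ∀ δ ∈ Set.Icc (0:ℝ) 1,
        Lwl IA ε δ = dualF A ε δ ∧ Lwl IAd ε δ = dualF A ε δ) ↔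
      ABUltramodular A 1 1 := by
  have h11 : A 1 1 = 1 := hA.2.2.2
  have hLwl_dual : Lwl IAd = Lwl IA :=
    Lwl_eq_of_w_eq_reflect (IsBestRep.w_dualF_eq hIA hIAd)
  simp only [hLwl_dual, and_self]
  rw [Lwl_eq_iff_widthLimited (exists_w_eq_dualF hIA h11), widthLimited_dualF_iff hIA h11]
end
end

section
/- Let A : [0,1]² → [0,1] be an ultramodular aggregation function. Then the least width-limiting functions of the best interval representations Â and Â^d both equal the dual A^d, i.e., 𝔏(Â) = 𝔏(Â^d) = A^d, where 𝔏(IF)(ε, δ) = sup{ w(IF([u, u+ε], [v, v+δ])) : u ∈ [0, 1−ε], v ∈ [0, 1−δ] }. -/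
open Set

noncomputable section

theorem statement6 (A : ℝ → ℝ → ℝ) (hA : IsAggregation A) (hU : Ultramodular A)
    (IA IAd : IV → IV → IV)
    (hIA : ∀ X Y : IV, (IA X Y).lo = A X.lo Y.lo ∧ (IA X Y).hi = A X.hi Y.hi)
    (hIAd : ∀ X Y : IV,
      (IAd X Y).lo = dualF A X.lo Y.lo ∧ (IAd X Y).hi = dualF A X.hi Y.hi) :
    ∀ ε ∈ Set.Icc (0:ℝ) 1, ∀ δ ∈ Set.Icc (0:ℝ) 1,
      Lwl IA ε δ = dualF A ε δ ∧ Lwl IAd ε δ = dualF A ε δ := by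
  obtain ⟨hMap, hIncr, h00, h11⟩ := hA
  intro ε hε δ hδ
  have hε0 := hε.1; have hε1 := hε.2
  have hδ0 := hδ.1; have hδ1 := hδ.2
  have h1e : (1:ℝ) - ε ∈ Set.Icc (0:ℝ) 1 := ⟨by linarith, by linarith⟩
  have h1d : (1:ℝ) - δ ∈ Set.Icc (0:ℝ) 1 := ⟨by linarith, by linarith⟩
  have key : ∀ u v : ℝ, 0 ≤ u → u ≤ 1 - ε → 0 ≤ v → v ≤ 1 - δ →
      A (u + ε) (v + δ) - A u v ≤ 1 - A (1 - ε) (1 - δ) := by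
    intro u v hu0 hu1 hv0 hv1
    have hu' : u ∈ Set.Icc (0:ℝ) 1 := ⟨hu0, by linarith⟩
    have hv' : v ∈ Set.Icc (0:ℝ) 1 := ⟨hv0, by linarith⟩
    have h := hU u hu' (1 - ε) h1e v hv' (1 - δ) h1d ε hε δ hδ
      (by constructor <;> norm_num) (by constructor <;> norm_num)
      hu1 hv1
    have e1 : 1 - ε + ε = (1:ℝ) := by ring
    have e2 : 1 - δ + δ = (1:ℝ) := by ring
    rw [e1, e2, h11] at h
    linarith
  have hbnd : 0 ≤ 1 - A (1 - ε) (1 - δ) := by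
    have := (hMap _ h1e _ h1d).2; linarith
  -- the extremal intervals
  have hXe : ∃ X : IV, X.lo = 1 - ε ∧ X.hi = 1 := ⟨⟨1 - ε, 1, h1e, by norm_num, by linarith⟩, rfl, rfl⟩
  constructor
  · apply le_antisymm
    · apply Real.sSup_le
      · rintro t ⟨X, Y, hX, hY, rfl⟩
        have hw : (IA X Y).w = A X.hi Y.hi - A X.lo Y.lo := by
          rw [IV.w, (hIA X Y).1, (hIA X Y).2]
        have hXhi : X.hi = X.lo + ε := by simp [IV.w] at hX; linarith
        have hYhi : Y.hi = Y.lo + δ := by simp [IV.w] at hY; linarith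
        have := key X.lo Y.lo X.lo_mem.1 (by have := X.hi_mem.2; linarith)
          Y.lo_mem.1 (by have := Y.hi_mem.2; linarith)
        rw [hw, hXhi, hYhi]
        exact this
      · exact hbnd
    · apply le_csSup
      · exact ⟨1 - A (1 - ε) (1 - δ), by
          rintro t ⟨X, Y, hX, hY, rfl⟩
          have hw : (IA X Y).w = A X.hi Y.hi - A X.lo Y.lo := by
            rw [IV.w, (hIA X Y).1, (hIA X Y).2]
          have hXhi : X.hi = X.lo + ε := by simp [IV.w] at hX; linarith
          have hYhi : Y.hi = Y.lo + δ := by simp [IV.w] at hY; linarith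
          have := key X.lo Y.lo X.lo_mem.1 (by have := X.hi_mem.2; linarith)
            Y.lo_mem.1 (by have := Y.hi_mem.2; linarith)
          rw [hw, hXhi, hYhi]; exact this⟩
      · refine ⟨⟨1 - ε, 1, h1e, by norm_num, by linarith⟩,
          ⟨1 - δ, 1, h1d, by norm_num, by linarith⟩, by simp [IV.w], by simp [IV.w],
          ?_⟩
        have hw := hIA ⟨1 - ε, 1, h1e, by norm_num, by linarith⟩
          ⟨1 - δ, 1, h1d, by norm_num, by linarith⟩
        rw [dualF, IV.w, hw.1, hw.2]
        simp [h11]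
  · apply le_antisymm
    · apply Real.sSup_le
      · rintro t ⟨X, Y, hX, hY, rfl⟩
        have hw : (IAd X Y).w = A (1 - X.lo) (1 - Y.lo) - A (1 - X.hi) (1 - Y.hi) := by
          rw [IV.w, (hIAd X Y).1, (hIAd X Y).2, dualF, dualF]; ring
        have hXhi : X.hi = X.lo + ε := by simp [IV.w] at hX; linarith
        have hYhi : Y.hi = Y.lo + δ := by simp [IV.w] at hY; linarith
        have e1 : 1 - X.lo = (1 - X.hi) + ε := by rw [hXhi]; ring
        have e2 : 1 - Y.lo = (1 - Y.hi) + δ := by rw [hYhi]; ring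
        have := key (1 - X.hi) (1 - Y.hi) (by have := X.hi_mem.2; linarith)
          (by have := X.lo_mem.1; rw [hXhi]; linarith)
          (by have := Y.hi_mem.2; linarith)
          (by have := Y.lo_mem.1; rw [hYhi]; linarith)
        rw [hw, e1, e2]
        exact this
      · exact hbnd
    · apply le_csSup
      · exact ⟨1 - A (1 - ε) (1 - δ), by
          rintro t ⟨X, Y, hX, hY, rfl⟩
          have hw : (IAd X Y).w = A (1 - X.lo) (1 - Y.lo) - A (1 - X.hi) (1 - Y.hi) := by
            rw [IV.w, (hIAd X Y).1, (hIAd X Y).2, dualF, dualF]; ring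
          have hXhi : X.hi = X.lo + ε := by simp [IV.w] at hX; linarith
          have hYhi : Y.hi = Y.lo + δ := by simp [IV.w] at hY; linarith
          have e1 : 1 - X.lo = (1 - X.hi) + ε := by rw [hXhi]; ring
          have e2 : 1 - Y.lo = (1 - Y.hi) + δ := by rw [hYhi]; ring
          have := key (1 - X.hi) (1 - Y.hi) (by have := X.hi_mem.2; linarith)
            (by have := X.lo_mem.1; rw [hXhi]; linarith)
            (by have := Y.hi_mem.2; linarith)
            (by have := Y.lo_mem.1; rw [hYhi]; linarith)
          rw [hw, e1, e2]; exact this⟩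
      · refine ⟨⟨0, ε, by norm_num, hε, hε0⟩, ⟨0, δ, by norm_num, hδ, hδ0⟩,
          by simp [IV.w], by simp [IV.w], ?_⟩
        have hw := hIAd ⟨0, ε, by norm_num, hε, hε0⟩ ⟨0, δ, by norm_num, hδ, hδ0⟩
        rw [dualF, IV.w, hw.1, hw.2, dualF, dualF]
        simp [h11]
end
end

section
/- Let F₁, F₂, G : [0,1]² → [0,1] be aggregation functions, let IF₁ = F̂₁, IF₂ = F̂₂, IG = Ĝ be their best interval representations, and let IH : L([0,1])² → L([0,1]) be defined by IH(X,Y) = IG(IF₁(X,Y), IF₂(X,Y)). Then 𝔏(IH)(ε, δ) ≤ 𝔏(IG)(𝔏(IF₁)(ε, δ), 𝔏(IF₂)(ε, δ)) for all ε, δ ∈ [0,1], where 𝔏(IF)(ε, δ) = sup{ w(IF([u, u+ε], [v, v+δ])) : u ∈ [0, 1−ε], v ∈ [0, 1−δ] }. -/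
open Set

noncomputable section

/-- A canonical interval of prescribed width. -/
def mkIV (ε : ℝ) (hε : ε ∈ Set.Icc (0:ℝ) 1) : IV :=
  ⟨0, ε, by simp, hε, hε.1⟩

lemma w_mem_Icc (X : IV) : X.w ∈ Set.Icc (0:ℝ) 1 := by
  have h1 := X.lo_mem; have h2 := X.hi_mem; have h3 := X.lo_le_hi
  constructor <;> simp [IV.w] <;> [linarith [h3]; linarith [h1.1, h2.2]]

lemma Lwl_set_nonempty (IFn : IV → IV → IV) {ε δ : ℝ}
    (hε : ε ∈ Set.Icc (0:ℝ) 1) (hδ : δ ∈ Set.Icc (0:ℝ) 1) :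
    {t : ℝ | ∃ X Y : IV, X.w = ε ∧ Y.w = δ ∧ t = (IFn X Y).w}.Nonempty := by
  refine ⟨(IFn (mkIV ε hε) (mkIV δ hδ)).w, mkIV ε hε, mkIV δ hδ, ?_, ?_, rfl⟩ <;>
    simp [IV.w, mkIV]

lemma Lwl_set_bddAbove (IFn : IV → IV → IV) (ε δ : ℝ) :
    BddAbove {t : ℝ | ∃ X Y : IV, X.w = ε ∧ Y.w = δ ∧ t = (IFn X Y).w} := by
  refine ⟨1, fun t ht => ?_⟩
  obtain ⟨X, Y, _, _, rfl⟩ := ht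
  exact (w_mem_Icc _).2

lemma Lwl_mem_Icc (IFn : IV → IV → IV) {ε δ : ℝ}
    (hε : ε ∈ Set.Icc (0:ℝ) 1) (hδ : δ ∈ Set.Icc (0:ℝ) 1) :
    Lwl IFn ε δ ∈ Set.Icc (0:ℝ) 1 := by
  constructor
  · obtain ⟨t, ht⟩ := Lwl_set_nonempty IFn hε hδ
    have h0 : 0 ≤ t := by obtain ⟨X, Y, _, _, rfl⟩ := ht; exact (w_mem_Icc _).1
    exact h0.trans (le_csSup (Lwl_set_bddAbove IFn ε δ) ht)
  · exact Real.sSup_le (fun t ht => by obtain ⟨X, Y, _, _, rfl⟩ := ht; exact (w_mem_Icc _).2)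
      zero_le_one

/-- Extension of an interval to a given larger width. -/
def extendIV (X : IV) (l : ℝ) (h1 : X.w ≤ l) (h2 : l ≤ 1) : IV where
  lo := min X.lo (1 - l)
  hi := min X.lo (1 - l) + l
  lo_mem := ⟨le_min X.lo_mem.1 (by linarith), (min_le_left _ _).trans X.lo_mem.2⟩
  hi_mem := ⟨by
      have h0 : (0:ℝ) ≤ l := le_trans (w_mem_Icc X).1 h1
      have := le_min X.lo_mem.1 (by linarith : (0:ℝ) ≤ 1 - l)
      linarith, by linarith [min_le_right X.lo (1 - l)]⟩
  lo_le_hi := by linarith [le_trans (w_mem_Icc X).1 h1]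

lemma extendIV_lo_le (X : IV) (l : ℝ) (h1 : X.w ≤ l) (h2 : l ≤ 1) :
    (extendIV X l h1 h2).lo ≤ X.lo := min_le_left _ _

lemma le_extendIV_hi (X : IV) (l : ℝ) (h1 : X.w ≤ l) (h2 : l ≤ 1) :
    X.hi ≤ (extendIV X l h1 h2).hi := by
  have : X.hi - l ≤ min X.lo (1 - l) := le_min (by simp [IV.w] at h1; linarith)
    (by linarith [X.hi_mem.2])
  show X.hi ≤ min X.lo (1 - l) + l
  linarith

lemma extendIV_w (X : IV) (l : ℝ) (h1 : X.w ≤ l) (h2 : l ≤ 1) :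
    (extendIV X l h1 h2).w = l := by simp [IV.w, extendIV]

theorem statement7 (F₁ F₂ G : ℝ → ℝ → ℝ)
    (hF₁ : IsAggregation F₁) (hF₂ : IsAggregation F₂) (hG : IsAggregation G)
    (IF₁ IF₂ IG IH : IV → IV → IV)
    (hIF₁ : ∀ X Y : IV, (IF₁ X Y).lo = F₁ X.lo Y.lo ∧ (IF₁ X Y).hi = F₁ X.hi Y.hi)
    (hIF₂ : ∀ X Y : IV, (IF₂ X Y).lo = F₂ X.lo Y.lo ∧ (IF₂ X Y).hi = F₂ X.hi Y.hi)
    (hIG : ∀ X Y : IV, (IG X Y).lo = G X.lo Y.lo ∧ (IG X Y).hi = G X.hi Y.hi)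
    (hIH : ∀ X Y : IV, IH X Y = IG (IF₁ X Y) (IF₂ X Y)) :
    ∀ ε ∈ Set.Icc (0:ℝ) 1, ∀ δ ∈ Set.Icc (0:ℝ) 1,
      Lwl IH ε δ ≤ Lwl IG (Lwl IF₁ ε δ) (Lwl IF₂ ε δ) := by
  intro ε hε δ hδ
  set a := Lwl IF₁ ε δ with ha
  set b := Lwl IF₂ ε δ with hb
  have haI : a ∈ Set.Icc (0:ℝ) 1 := Lwl_mem_Icc IF₁ hε hδ
  have hbI : b ∈ Set.Icc (0:ℝ) 1 := Lwl_mem_Icc IF₂ hε hδ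
  refine Real.sSup_le ?_ (Lwl_mem_Icc IG haI hbI).1
  rintro t ⟨X, Y, hX, hY, rfl⟩
  rw [hIH]
  set A := IF₁ X Y with hA
  set B := IF₂ X Y with hB
  have hAa : A.w ≤ a := le_csSup (Lwl_set_bddAbove IF₁ ε δ) ⟨X, Y, hX, hY, rfl⟩
  have hBb : B.w ≤ b := le_csSup (Lwl_set_bddAbove IF₂ ε δ) ⟨X, Y, hX, hY, rfl⟩
  set Z₁ := extendIV A a hAa haI.2 with hZ₁
  set Z₂ := extendIV B b hBb hbI.2 with hZ₂
  have hmono := hG.2.1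
  have hlo : G Z₁.lo Z₂.lo ≤ G A.lo B.lo :=
    hmono _ Z₁.lo_mem _ A.lo_mem _ Z₂.lo_mem _ B.lo_mem
      (extendIV_lo_le A a hAa haI.2) (extendIV_lo_le B b hBb hbI.2)
  have hhi : G A.hi B.hi ≤ G Z₁.hi Z₂.hi :=
    hmono _ A.hi_mem _ Z₁.hi_mem _ B.hi_mem _ Z₂.hi_mem
      (le_extendIV_hi A a hAa haI.2) (le_extendIV_hi B b hBb hbI.2)
  have hw : (IG A B).w ≤ (IG Z₁ Z₂).w := by
    have e1 := hIG A B
    have e2 := hIG Z₁ Z₂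
    simp only [IV.w, e1.1, e1.2, e2.1, e2.2]
    linarith
  refine hw.trans (le_csSup (Lwl_set_bddAbove IG a b) ?_)
  exact ⟨Z₁, Z₂, extendIV_w A a hAa haI.2, extendIV_w B b hBb hbI.2, rfl⟩
end
end

section
/- Let O₁, O₂, O₃ : [0,1]² → [0,1] be ultramodular overlap functions, and let O_C : [0,1]² → [0,1] be the overlap function defined by O_C(x,y) = O₃(O₁(x,y), O₂(x,y)). Then the best interval representation Ô_C is a width-limited interval-valued overlap function with respect to the tuple (≤_Pr, ≤_Pr, O_C^d), where O_C^d(x,y) = 1 − O_C(1−x, 1−y). -/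
open Set

noncomputable section

lemma IV.ext' {X Y : IV} (h1 : X.lo = Y.lo) (h2 : X.hi = Y.hi) : X = Y := by
  cases X; cases Y; simp_all

theorem statement10 (O₁ O₂ O₃ OC : ℝ → ℝ → ℝ)
    (h1 : IsOverlap O₁) (h1u : Ultramodular O₁)
    (h2 : IsOverlap O₂) (h2u : Ultramodular O₂)
    (h3 : IsOverlap O₃) (h3u : Ultramodular O₃)
    (hOC : ∀ x y : ℝ, OC x y = O₃ (O₁ x y) (O₂ x y))
    (hOCov : IsOverlap OC)
    (IOC : IV → IV → IV)
    (hIOC : ∀ X Y : IV, (IOC X Y).lo = OC X.lo Y.lo ∧ (IOC X Y).hi = OC X.hi Y.hi) :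
    IsWIVOverlap IOC IV.lePr IV.lePr (dualF OC) := by

  obtain ⟨OCmap, OCcomm, OCzero, OCone, OCincr, -⟩ := hOCov
  refine ⟨?_, ?_, ?_, ?_, ?_⟩
  · intro X Y
    exact IV.ext' (by rw [(hIOC X Y).1, (hIOC Y X).1, OCcomm _ X.lo_mem _ Y.lo_mem])
      (by rw [(hIOC X Y).2, (hIOC Y X).2, OCcomm _ X.hi_mem _ Y.hi_mem])
  · intro X Y
    rw [(hIOC X Y).1, (hIOC X Y).2, OCzero _ X.lo_mem _ Y.lo_mem,
      OCzero _ X.hi_mem _ Y.hi_mem]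
  · intro X Y
    rw [(hIOC X Y).1, (hIOC X Y).2, OCone _ X.lo_mem _ Y.lo_mem,
      OCone _ X.hi_mem _ Y.hi_mem]
  · intro X₁ X₂ Y₁ Y₂ hX hY
    constructor
    · rw [(hIOC X₁ Y₁).1, (hIOC X₂ Y₂).1]
      exact OCincr _ X₁.lo_mem _ X₂.lo_mem _ Y₁.lo_mem _ Y₂.lo_mem hX.1 hY.1
    · rw [(hIOC X₁ Y₁).2, (hIOC X₂ Y₂).2]
      exact OCincr _ X₁.hi_mem _ X₂.hi_mem _ Y₁.hi_mem _ Y₂.hi_mem hX.2 hY.2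
  · intro X Y
    have h01 : (1:ℝ) ∈ Set.Icc (0:ℝ) 1 := ⟨zero_le_one, le_refl 1⟩
    obtain ⟨hXl0, hXl1⟩ := X.lo_mem
    obtain ⟨hXh0, hXh1⟩ := X.hi_mem
    obtain ⟨hYl0, hYl1⟩ := Y.lo_mem
    obtain ⟨hYh0, hYh1⟩ := Y.hi_mem
    have hXw : X.w = X.hi - X.lo := rfl
    have hYw : Y.w = Y.hi - Y.lo := rfl
    have hXle := X.lo_le_hi
    have hYle := Y.lo_le_hi
    have hεm : X.w ∈ Set.Icc (0:ℝ) 1 := ⟨by rw [hXw]; linarith, by rw [hXw]; linarith⟩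
    have hδm : Y.w ∈ Set.Icc (0:ℝ) 1 := ⟨by rw [hYw]; linarith, by rw [hYw]; linarith⟩
    have h1εm : 1 - X.w ∈ Set.Icc (0:ℝ) 1 := ⟨by linarith [hεm.2], by linarith [hεm.1]⟩
    have h1δm : 1 - Y.w ∈ Set.Icc (0:ℝ) 1 := ⟨by linarith [hδm.2], by linarith [hδm.1]⟩
    set a := O₁ X.lo Y.lo with ha
    set a' := O₁ X.hi Y.hi with ha'
    set A := O₁ (1 - X.w) (1 - Y.w) with hA
    set b := O₂ X.lo Y.lo with hb
    set b' := O₂ X.hi Y.hi with hb'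
    set B := O₂ (1 - X.w) (1 - Y.w) with hB
    have ham : a ∈ Set.Icc (0:ℝ) 1 := h1.1 _ X.lo_mem _ Y.lo_mem
    have ha'm : a' ∈ Set.Icc (0:ℝ) 1 := h1.1 _ X.hi_mem _ Y.hi_mem
    have hAm : A ∈ Set.Icc (0:ℝ) 1 := h1.1 _ h1εm _ h1δm
    have hbm : b ∈ Set.Icc (0:ℝ) 1 := h2.1 _ X.lo_mem _ Y.lo_mem
    have hb'm : b' ∈ Set.Icc (0:ℝ) 1 := h2.1 _ X.hi_mem _ Y.hi_mem
    have hBm : B ∈ Set.Icc (0:ℝ) 1 := h2.1 _ h1εm _ h1δm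
    have haa' : a ≤ a' :=
      h1.2.2.2.2.1 _ X.lo_mem _ X.hi_mem _ Y.lo_mem _ Y.hi_mem hXle hYle
    have hbb' : b ≤ b' :=
      h2.2.2.2.2.1 _ X.lo_mem _ X.hi_mem _ Y.lo_mem _ Y.hi_mem hXle hYle
    have hO1one : O₁ 1 1 = 1 := (h1.2.2.2.1 1 h01 1 h01).2 (by ring)
    have hO2one : O₂ 1 1 = 1 := (h2.2.2.2.1 1 h01 1 h01).2 (by ring)
    have hO3one : O₃ 1 1 = 1 := (h3.2.2.2.1 1 h01 1 h01).2 (by ring)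
    -- ultramodularity of O₁
    have key1 : a' - a ≤ 1 - A := by
      have := h1u X.lo X.lo_mem (1 - X.w) h1εm Y.lo Y.lo_mem (1 - Y.w) h1δm
        X.w hεm Y.w hδm (by norm_num) (by norm_num)
        (by rw [hXw]; linarith) (by rw [hYw]; linarith)
      rw [show X.lo + X.w = X.hi by rw [hXw]; ring,
        show Y.lo + Y.w = Y.hi by rw [hYw]; ring,
        show 1 - X.w + X.w = 1 by ring, show 1 - Y.w + Y.w = 1 by ring, hO1one] at this
      linarith [this]
    have key2 : b' - b ≤ 1 - B := by
      have := h2u X.lo X.lo_mem (1 - X.w) h1εm Y.lo Y.lo_mem (1 - Y.w) h1δm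
        X.w hεm Y.w hδm (by norm_num) (by norm_num)
        (by rw [hXw]; linarith) (by rw [hYw]; linarith)
      rw [show X.lo + X.w = X.hi by rw [hXw]; ring,
        show Y.lo + Y.w = Y.hi by rw [hYw]; ring,
        show 1 - X.w + X.w = 1 by ring, show 1 - Y.w + Y.w = 1 by ring, hO2one] at this
      linarith [this]
    -- ultramodularity of O₃
    have hε3m : a' - a ∈ Set.Icc (0:ℝ) 1 :=
      ⟨by linarith, by linarith [ham.1, ha'm.2]⟩
    have hδ3m : b' - b ∈ Set.Icc (0:ℝ) 1 :=
      ⟨by linarith, by linarith [hbm.1, hb'm.2]⟩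
    have h1ε3m : 1 - (a' - a) ∈ Set.Icc (0:ℝ) 1 := ⟨by linarith [hε3m.2], by linarith [hε3m.1]⟩
    have h1δ3m : 1 - (b' - b) ∈ Set.Icc (0:ℝ) 1 := ⟨by linarith [hδ3m.2], by linarith [hδ3m.1]⟩
    have key3 : O₃ a' b' - O₃ a b ≤ 1 - O₃ (1 - (a' - a)) (1 - (b' - b)) := by
      have := h3u a ham (1 - (a' - a)) h1ε3m b hbm (1 - (b' - b)) h1δ3m
        (a' - a) hε3m (b' - b) hδ3m (by norm_num) (by norm_num)
        (by linarith [ha'm.2]) (by linarith [hb'm.2])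
      rw [show a + (a' - a) = a' by ring, show b + (b' - b) = b' by ring,
        show 1 - (a' - a) + (a' - a) = 1 by ring,
        show 1 - (b' - b) + (b' - b) = 1 by ring, hO3one] at this
      linarith [this]
    have key4 : O₃ A B ≤ O₃ (1 - (a' - a)) (1 - (b' - b)) :=
      h3.2.2.2.2.1 _ hAm _ h1ε3m _ hBm _ h1δ3m (by linarith) (by linarith)
    show (IOC X Y).hi - (IOC X Y).lo ≤ dualF OC X.w Y.w
    rw [(hIOC X Y).1, (hIOC X Y).2]
    unfold dualF
    rw [hOC X.hi Y.hi, hOC X.lo Y.lo, hOC (1 - X.w) (1 - Y.w)]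
    rw [← ha, ← ha', ← hA, ← hb, ← hb', ← hB]
    linarith [key3, key4]
end
end

section
/- Let O₁, O₂ : [0,1]² → [0,1] be ultramodular overlap functions, let α ∈ [0,1], and let O_α : [0,1]² → [0,1] be the overlap function defined by O_α(x,y) = K_α(O₁(x,y), O₂(x,y)), where K_α(x,y) = x + α(y − x). Then the best interval representation Ô_α is a width-limited interval-valued overlap function with respect to the tuple (≤_Pr, ≤_Pr, O_α^d), where O_α^d(x,y) = 1 − O_α(1−x, 1−y). -/
open Set

noncomputable section

theorem statement11 (O₁ O₂ Oa : ℝ → ℝ → ℝ) (α : ℝ) (hα : α ∈ Set.Icc (0:ℝ) 1)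
    (h1 : IsOverlap O₁) (h1u : Ultramodular O₁)
    (h2 : IsOverlap O₂) (h2u : Ultramodular O₂)
    (hOa : ∀ x y : ℝ, Oa x y = Kab α (O₁ x y) (O₂ x y))
    (hOaov : IsOverlap Oa)
    (IOa : IV → IV → IV)
    (hIOa : ∀ X Y : IV, (IOa X Y).lo = Oa X.lo Y.lo ∧ (IOa X Y).hi = Oa X.hi Y.hi) :
    IsWIVOverlap IOa IV.lePr IV.lePr (dualF Oa) := by
  obtain ⟨hmap, hcomm, hzero, hone, hincr, _⟩ := hOaov
  have hext : ∀ X Y : IV, X.lo = Y.lo → X.hi = Y.hi → X = Y := by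
    intro X Y hl hh; cases X; cases Y; simp_all
  -- ultramodularity of Oa
  have hultra : Ultramodular Oa := by
    intro x₁ hx₁ x₂ hx₂ y₁ hy₁ y₂ hy₂ ε hε δ hδ hxe hye hx hy
    have hx₁e : x₁ + ε ∈ Set.Icc (0:ℝ) 1 :=
      ⟨by linarith [hx₁.1, hε.1], by linarith [hxe.2]⟩
    have hy₁e : y₁ + δ ∈ Set.Icc (0:ℝ) 1 :=
      ⟨by linarith [hy₁.1, hδ.1], by linarith [hye.2]⟩
    have u1 := h1u x₁ hx₁ x₂ hx₂ y₁ hy₁ y₂ hy₂ ε hε δ hδ hxe hye hx hy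
    have u2 := h2u x₁ hx₁ x₂ hx₂ y₁ hy₁ y₂ hy₂ ε hε δ hδ hxe hye hx hy
    simp only [hOa, Kab]
    nlinarith [hα.1, hα.2]
  refine ⟨?_, ?_, ?_, ?_, ?_⟩
  · intro X Y
    apply hext
    · rw [(hIOa X Y).1, (hIOa Y X).1, hcomm X.lo X.lo_mem Y.lo Y.lo_mem]
    · rw [(hIOa X Y).2, (hIOa Y X).2, hcomm X.hi X.hi_mem Y.hi Y.hi_mem]
  · intro X Y
    rw [(hIOa X Y).1, (hIOa X Y).2, hzero X.lo X.lo_mem Y.lo Y.lo_mem,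
      hzero X.hi X.hi_mem Y.hi Y.hi_mem]
  · intro X Y
    rw [(hIOa X Y).1, (hIOa X Y).2, hone X.lo X.lo_mem Y.lo Y.lo_mem,
      hone X.hi X.hi_mem Y.hi Y.hi_mem]
  · intro X₁ X₂ Y₁ Y₂ hX hY
    constructor
    · rw [(hIOa X₁ Y₁).1, (hIOa X₂ Y₂).1]
      exact hincr X₁.lo X₁.lo_mem X₂.lo X₂.lo_mem Y₁.lo Y₁.lo_mem Y₂.lo Y₂.lo_mem hX.1 hY.1
    · rw [(hIOa X₁ Y₁).2, (hIOa X₂ Y₂).2]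
      exact hincr X₁.hi X₁.hi_mem X₂.hi X₂.hi_mem Y₁.hi Y₁.hi_mem Y₂.hi Y₂.hi_mem hX.2 hY.2
  · intro X Y
    have h11 : Oa 1 1 = 1 := by
      rw [hone 1 (by norm_num) 1 (by norm_num)]; ring
    set ε := X.w with hεdef
    set δ := Y.w with hδdef
    have hεm : ε ∈ Set.Icc (0:ℝ) 1 := by
      constructor <;> simp only [hεdef, IV.w] <;>
        [linarith [X.lo_le_hi]; linarith [X.lo_mem.1, X.hi_mem.2]]
    have hδm : δ ∈ Set.Icc (0:ℝ) 1 := by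
      constructor <;> simp only [hδdef, IV.w] <;>
        [linarith [Y.lo_le_hi]; linarith [Y.lo_mem.1, Y.hi_mem.2]]
    have h1εm : (1 : ℝ) - ε ∈ Set.Icc (0:ℝ) 1 := ⟨by linarith [hεm.2], by linarith [hεm.1]⟩
    have h1δm : (1 : ℝ) - δ ∈ Set.Icc (0:ℝ) 1 := ⟨by linarith [hδm.2], by linarith [hδm.1]⟩
    have key := hultra X.lo X.lo_mem (1 - ε) h1εm Y.lo Y.lo_mem (1 - δ) h1δm
      ε hεm δ hδm (by norm_num) (by norm_num)
      (by simp only [hεdef, IV.w]; linarith [X.hi_mem.2])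
      (by simp only [hδdef, IV.w]; linarith [Y.hi_mem.2])
    have hxe : X.lo + ε = X.hi := by simp [hεdef, IV.w]
    have hye : Y.lo + δ = Y.hi := by simp [hδdef, IV.w]
    rw [hxe, hye] at key
    have h1e : (1 : ℝ) - ε + ε = 1 := by ring
    have h1d : (1 : ℝ) - δ + δ = 1 := by ring
    rw [h1e, h1d, h11] at key
    show (IOa X Y).hi - (IOa X Y).lo ≤ dualF Oa ε δ
    rw [(hIOa X Y).1, (hIOa X Y).2]
    simp only [dualF]
    linarith [key]
end
end

section
/- Let O : [0,1]² → [0,1] be a strict overlap function and X, Y, Z ∈ L([0,1]) with X ≤_Pr Y and Z⁻ > 0. Then: (a) if X⁻ = Y⁻ and X⁺ < Y⁺, then K_α(Ô(X,Z)) < K_α(Ô(Y,Z)) for all α ∈ (0,1]; (b) if X⁻ < Y⁻ and X⁺ = Y⁺, then K_α(Ô(X,Z)) < K_α(Ô(Y,Z)) for all α ∈ [0,1); (c) if X⁻ < Y⁻ and X⁺ < Y⁺, then K_α(Ô(X,Z)) < K_α(Ô(Y,Z)) for all α ∈ [0,1]. -/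
open Set

noncomputable section

lemma strict_aux (O : ℝ → ℝ → ℝ) (hO : IsStrictOverlap O)
    {x y z : ℝ} (hx : x ∈ Set.Icc (0:ℝ) 1) (hy : y ∈ Set.Icc (0:ℝ) 1)
    (hz : z ∈ Set.Ioc (0:ℝ) 1) (hxy : x < y) : O x z < O y z := by
  obtain ⟨⟨hmap, _, hzero, _, _, _⟩, hstrict⟩ := hO
  have hzI : z ∈ Set.Icc (0:ℝ) 1 := ⟨hz.1.le, hz.2⟩
  rcases eq_or_lt_of_le hx.1 with hx0 | hx0
  · have h1 : O x z = 0 := by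
      rw [hzero x hx z hzI, ← hx0, zero_mul]
    have h2 : O y z ≠ 0 := by
      intro h
      have := (hzero y hy z hzI).mp h
      have hy0 : 0 < y := lt_of_le_of_lt hx.1 (hx0 ▸ hxy)
      nlinarith [hz.1]
    have h3 : 0 ≤ O y z := (hmap y hy z hzI).1
    rw [h1]
    exact lt_of_le_of_ne h3 (Ne.symm h2)
  · exact (hstrict x ⟨hx0, hx.2⟩ y ⟨lt_trans hx0 hxy, hy.2⟩ z hz).mp hxy

theorem statement13 (O : ℝ → ℝ → ℝ) (hO : IsStrictOverlap O)
    (X Y Z : IV) (hXY : IV.lePr X Y) (hZ : 0 < Z.lo) :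
    (X.lo = Y.lo → X.hi < Y.hi → ∀ α ∈ Set.Ioc (0:ℝ) 1,
      Kab α (O X.lo Z.lo) (O X.hi Z.hi) < Kab α (O Y.lo Z.lo) (O Y.hi Z.hi)) ∧
    (X.lo < Y.lo → X.hi = Y.hi → ∀ α ∈ Set.Ico (0:ℝ) 1,
      Kab α (O X.lo Z.lo) (O X.hi Z.hi) < Kab α (O Y.lo Z.lo) (O Y.hi Z.hi)) ∧
    (X.lo < Y.lo → X.hi < Y.hi → ∀ α ∈ Set.Icc (0:ℝ) 1,
      Kab α (O X.lo Z.lo) (O X.hi Z.hi) < Kab α (O Y.lo Z.lo) (O Y.hi Z.hi)) := by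
  have hOmono := hO.1.2.2.2.2.1
  have hZlo : Z.lo ∈ Set.Ioc (0:ℝ) 1 := ⟨hZ, Z.lo_mem.2⟩
  have hZhi : Z.hi ∈ Set.Ioc (0:ℝ) 1 := ⟨lt_of_lt_of_le hZ Z.lo_le_hi, Z.hi_mem.2⟩
  refine ⟨?_, ?_, ?_⟩
  · intro hlo hhi α hα
    have h1 : O X.lo Z.lo = O Y.lo Z.lo := by rw [hlo]
    have h2 : O X.hi Z.hi < O Y.hi Z.hi :=
      strict_aux O hO X.hi_mem Y.hi_mem hZhi hhi
    simp only [Kab, h1]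
    nlinarith [hα.1]
  · intro hlo hhi α hα
    have h1 : O X.lo Z.lo < O Y.lo Z.lo :=
      strict_aux O hO X.lo_mem Y.lo_mem hZlo hlo
    have h2 : O X.hi Z.hi = O Y.hi Z.hi := by rw [hhi]
    simp only [Kab, h2]
    nlinarith [hα.2]
  · intro hlo hhi α hα
    have h1 : O X.lo Z.lo < O Y.lo Z.lo :=
      strict_aux O hO X.lo_mem Y.lo_mem hZlo hlo
    have h2 : O X.hi Z.hi < O Y.hi Z.hi :=
      strict_aux O hO X.hi_mem Y.hi_mem hZhi hhi
    simp only [Kab]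
    rcases eq_or_lt_of_le hα.1 with h0 | h0
    · rw [← h0]; simpa using h1
    · nlinarith [mul_pos h0 (sub_pos.mpr h2), mul_nonneg (sub_nonneg.mpr hα.2) (sub_pos.mpr h1).le]
end
end

section
/- Let O : [0,1]² → [0,1] be a strict overlap function, B : [0,1]² → [0,1] an increasing commutative function, α ∈ (0,1], and let IOw_B^α(X,Y) = [K_α(Ô(X,Y)) − α·m(X,Y), K_α(Ô(X,Y)) + (1−α)·m(X,Y)] with m(X,Y) = min{w(Ô(X,Y)), B(w(X), w(Y))}. Then for all X, Y ∈ L([0,1]) one has IOw_B^α(X,Y) ⊆ Ô(X,Y), i.e., Ô(X,Y)⁻ ≤ IOw_B^α(X,Y)⁻ and IOw_B^α(X,Y)⁺ ≤ Ô(X,Y)⁺. -/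
open Set

noncomputable section

theorem statement15 (O B : ℝ → ℝ → ℝ) (hO : IsStrictOverlap O)
    (hBi : IncrIcc B)
    (hBc : ∀ x ∈ Set.Icc (0:ℝ) 1, ∀ y ∈ Set.Icc (0:ℝ) 1, B x y = B y x)
    (α : ℝ) (hα : α ∈ Set.Ioc (0:ℝ) 1)
    (IOw : IV → IV → IV)
    (hIOw : ∀ X Y : IV,
      (IOw X Y).lo = Kab α (O X.lo Y.lo) (O X.hi Y.hi)
          - α * min (O X.hi Y.hi - O X.lo Y.lo) (B X.w Y.w) ∧
      (IOw X Y).hi = Kab α (O X.lo Y.lo) (O X.hi Y.hi)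
          + (1 - α) * min (O X.hi Y.hi - O X.lo Y.lo) (B X.w Y.w)) :
    ∀ X Y : IV, O X.lo Y.lo ≤ (IOw X Y).lo ∧ (IOw X Y).hi ≤ O X.hi Y.hi := by
  intro X Y
  obtain ⟨hlo, hhi⟩ := hIOw X Y
  have hOincr : IncrIcc O := hO.1.2.2.2.2.1
  have hd : O X.lo Y.lo ≤ O X.hi Y.hi :=
    hOincr X.lo X.lo_mem X.hi X.hi_mem Y.lo Y.lo_mem Y.hi Y.hi_mem X.lo_le_hi Y.lo_le_hi
  have hm : min (O X.hi Y.hi - O X.lo Y.lo) (B X.w Y.w) ≤ O X.hi Y.hi - O X.lo Y.lo :=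
    min_le_left _ _
  have hα0 : 0 < α := hα.1
  have hα1 : α ≤ 1 := hα.2
  constructor
  · rw [hlo, Kab]; nlinarith
  · rw [hhi, Kab]; nlinarith
end
end

section
/- Let O : [0,1]² → [0,1] be a (1,1)-ultramodular strict overlap function, A : [0,1]² → [0,1] an aggregation function with A ≥ O^d pointwise, α ∈ (0,1], and let IOw_A^α(X,Y) = [K_α(Ô(X,Y)) − α·m(X,Y), K_α(Ô(X,Y)) + (1−α)·m(X,Y)] with m(X,Y) = min{w(Ô(X,Y)), A(w(X), w(Y))}. Then IOw_A^α(X,Y) = Ô(X,Y) for all X, Y ∈ L([0,1]). -/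
open Set

noncomputable section

theorem statement16 (O A : ℝ → ℝ → ℝ) (hO : IsStrictOverlap O)
    (hU : ABUltramodular O 1 1) (hA : IsAggregation A)
    (hAge : ∀ x ∈ Set.Icc (0:ℝ) 1, ∀ y ∈ Set.Icc (0:ℝ) 1, dualF O x y ≤ A x y)
    (α : ℝ) (hα : α ∈ Set.Ioc (0:ℝ) 1)
    (IOw : IV → IV → IV)
    (hIOw : ∀ X Y : IV,
      (IOw X Y).lo = Kab α (O X.lo Y.lo) (O X.hi Y.hi)
          - α * min (O X.hi Y.hi - O X.lo Y.lo) (A X.w Y.w) ∧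
      (IOw X Y).hi = Kab α (O X.lo Y.lo) (O X.hi Y.hi)
          + (1 - α) * min (O X.hi Y.hi - O X.lo Y.lo) (A X.w Y.w)) :
    ∀ X Y : IV, (IOw X Y).lo = O X.lo Y.lo ∧ (IOw X Y).hi = O X.hi Y.hi := by
  intro X Y
  obtain ⟨hlo, hhi⟩ := hIOw X Y
  have hXlo := X.lo_mem; have hXhi := X.hi_mem
  have hYlo := Y.lo_mem; have hYhi := Y.hi_mem
  have hXw : X.w ∈ Set.Icc (0:ℝ) 1 := by
    constructor
    · simp [IV.w]; exact X.lo_le_hi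
    · simp only [IV.w]; linarith [hXlo.1, hXhi.2]
  have hYw : Y.w ∈ Set.Icc (0:ℝ) 1 := by
    constructor
    · simp [IV.w]; exact Y.lo_le_hi
    · simp only [IV.w]; linarith [hYlo.1, hYhi.2]
  have hXsum : X.lo + X.w = X.hi := by simp [IV.w]
  have hYsum : Y.lo + Y.w = Y.hi := by simp [IV.w]
  have h1X : (1:ℝ) - X.w ∈ Set.Icc (0:ℝ) 1 := by
    constructor <;> [linarith [hXw.2]; linarith [hXw.1]]
  have h1Y : (1:ℝ) - Y.w ∈ Set.Icc (0:ℝ) 1 := by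
    constructor <;> [linarith [hYw.2]; linarith [hYw.1]]
  have hum := hU X.lo hXlo Y.lo hYlo X.w hXw Y.w hYw
    (by rw [hXsum]; exact hXhi) (by rw [hYsum]; exact hYhi) h1X h1Y
  rw [hXsum, hYsum] at hum
  have hO11 : O 1 1 = 1 := by
    have := (hO.1.2.2.2.1 1 (by norm_num) 1 (by norm_num)).2
    simpa using this
  have hdual : dualF O X.w Y.w ≤ A X.w Y.w := hAge X.w hXw Y.w hYw
  unfold dualF at hdual
  have hkey : O X.hi Y.hi - O X.lo Y.lo ≤ A X.w Y.w := by
    rw [hO11] at hum; linarith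
  have hmin : min (O X.hi Y.hi - O X.lo Y.lo) (A X.w Y.w) = O X.hi Y.hi - O X.lo Y.lo :=
    min_eq_left hkey
  rw [hmin] at hlo hhi
  constructor
  · rw [hlo]; unfold Kab; ring
  · rw [hhi]; unfold Kab; ring
end
end

section
/- Let O : [0,1]² → [0,1] be a strict overlap function, B : [0,1]² → [0,1] a commutative, increasing and conjunctive function, and α ∈ (0,1), β ∈ [0,1] with α ≠ β. Define IOw_B^α : L([0,1])² → L([0,1]) by IOw_B^α(X,Y) = [O(K_α(X), K_α(Y)) − α·θ, O(K_α(X), K_α(Y)) + (1−α)·θ], where θ = B(B(w(X), w(Y)), B(O(K_α(X), K_α(Y)), 1 − O(K_α(X), K_α(Y)))). Then IOw_B^α is a width-limited interval-valued overlap function with respect to the tuple (≤_{α,β}, ≤_{α,β}, B). -/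
open Set

noncomputable section

theorem statement17 (O B : ℝ → ℝ → ℝ) (hO : IsStrictOverlap O)
    (hBm : MapsIcc B) (hBi : IncrIcc B)
    (hBc : ∀ x ∈ Set.Icc (0:ℝ) 1, ∀ y ∈ Set.Icc (0:ℝ) 1, B x y = B y x)
    (hBconj : ∀ x ∈ Set.Icc (0:ℝ) 1, ∀ y ∈ Set.Icc (0:ℝ) 1, B x y ≤ min x y)
    (α β : ℝ) (hα : α ∈ Set.Ioo (0:ℝ) 1) (hβ : β ∈ Set.Icc (0:ℝ) 1) (hne : α ≠ β)
    (IOw : IV → IV → IV)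
    (hIOw : ∀ X Y : IV,
      (IOw X Y).lo = O (KI α X) (KI α Y)
          - α * B (B X.w Y.w) (B (O (KI α X) (KI α Y)) (1 - O (KI α X) (KI α Y))) ∧
      (IOw X Y).hi = O (KI α X) (KI α Y)
          + (1 - α) * B (B X.w Y.w) (B (O (KI α X) (KI α Y)) (1 - O (KI α X) (KI α Y)))) :
    IsWIVOverlap IOw (leAB α β) (leAB α β) B := by
  obtain ⟨⟨hOm, hOc, hO0, hO1, hOi, _⟩, hOs⟩ := hO
  obtain ⟨hα0, hα1⟩ := hα
  -- basic membership facts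
  have hKmem : ∀ X : IV, KI α X ∈ Set.Icc (0:ℝ) 1 := by
    intro X
    have h1 := X.lo_mem; have h2 := X.hi_mem; have h3 := X.lo_le_hi
    simp only [Set.mem_Icc] at *
    unfold KI
    constructor <;> nlinarith [h1.1, h1.2, h2.1, h2.2]
  have hwmem : ∀ X : IV, X.w ∈ Set.Icc (0:ℝ) 1 := by
    intro X
    have h1 := X.lo_mem; have h2 := X.hi_mem; have h3 := X.lo_le_hi
    simp only [Set.mem_Icc] at *
    unfold IV.w
    constructor <;> linarith [h1.1, h1.2, h2.1, h2.2]
  have hcmem : ∀ X Y : IV, O (KI α X) (KI α Y) ∈ Set.Icc (0:ℝ) 1 :=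
    fun X Y => hOm _ (hKmem X) _ (hKmem Y)
  have h1cmem : ∀ X Y : IV, 1 - O (KI α X) (KI α Y) ∈ Set.Icc (0:ℝ) 1 := by
    intro X Y
    have := hcmem X Y
    simp only [Set.mem_Icc] at *
    constructor <;> linarith [this.1, this.2]
  set θ : IV → IV → ℝ :=
    fun X Y => B (B X.w Y.w) (B (O (KI α X) (KI α Y)) (1 - O (KI α X) (KI α Y))) with hθdef
  have hθeq : ∀ X Y : IV,
      B (B X.w Y.w) (B (O (KI α X) (KI α Y)) (1 - O (KI α X) (KI α Y))) = θ X Y :=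
    fun _ _ => rfl
  have hθmem : ∀ X Y : IV, θ X Y ∈ Set.Icc (0:ℝ) 1 := by
    intro X Y
    exact hBm _ (hBm _ (hwmem X) _ (hwmem Y)) _ (hBm _ (hcmem X Y) _ (h1cmem X Y))
  have hθle : ∀ X Y : IV,
      θ X Y ≤ min (O (KI α X) (KI α Y)) (1 - O (KI α X) (KI α Y)) := by
    intro X Y
    have h1 := hBconj _ (hBm _ (hwmem X) _ (hwmem Y)) _ (hBm _ (hcmem X Y) _ (h1cmem X Y))
    have h2 := hBconj _ (hcmem X Y) _ (h1cmem X Y)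
    calc θ X Y ≤ _ := h1
      _ ≤ B (O (KI α X) (KI α Y)) (1 - O (KI α X) (KI α Y)) := min_le_right _ _
      _ ≤ _ := h2
  have hθleB : ∀ X Y : IV, θ X Y ≤ B X.w Y.w := by
    intro X Y
    have h1 := hBconj _ (hBm _ (hwmem X) _ (hwmem Y)) _ (hBm _ (hcmem X Y) _ (h1cmem X Y))
    exact h1.trans (min_le_left _ _)
  have hwidth : ∀ X Y : IV, (IOw X Y).w = θ X Y := by
    intro X Y
    have h := hIOw X Y
    unfold IV.w
    rw [h.1, h.2, hθeq X Y]; ring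
  -- characterizations of K_α X = 0 and = 1
  have hK0 : ∀ X : IV, KI α X = 0 ↔ X.hi = 0 := by
    intro X
    have h1 := X.lo_mem; have h2 := X.hi_mem; have h3 := X.lo_le_hi
    simp only [Set.mem_Icc] at h1 h2
    unfold KI
    constructor
    · intro h
      nlinarith [h1.1, h2.1]
    · intro h
      have : X.lo = 0 := le_antisymm (h ▸ h3) h1.1
      rw [h, this]; ring
  have hK1 : ∀ X : IV, KI α X = 1 ↔ X.lo = 1 ∧ X.hi = 1 := by
    intro X
    have h1 := X.lo_mem; have h2 := X.hi_mem; have h3 := X.lo_le_hi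
    simp only [Set.mem_Icc] at h1 h2
    unfold KI
    constructor
    · intro h
      constructor <;> nlinarith [h1.1, h1.2, h2.1, h2.2]
    · rintro ⟨hl, hh⟩
      rw [hl, hh]; ring
  refine ⟨?_, ?_, ?_, ?_, ?_⟩
  · -- commutativity
    intro X Y
    have h1 := hIOw X Y
    have h2 := hIOw Y X
    have hOcc : O (KI α X) (KI α Y) = O (KI α Y) (KI α X) := hOc _ (hKmem X) _ (hKmem Y)
    have hBcc : B X.w Y.w = B Y.w X.w := hBc _ (hwmem X) _ (hwmem Y)
    refine IV.ext' ?_ ?_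
    · rw [h1.1, h2.1, hOcc, hBcc]
    · rw [h1.2, h2.2, hOcc, hBcc]
  · -- zero characterization
    intro X Y
    have h := hIOw X Y
    constructor
    · rintro ⟨hl, hh⟩
      rw [h.1, hθeq X Y] at hl; rw [h.2, hθeq X Y] at hh
      have hθ0 : θ X Y = 0 := by linarith
      have hc0 : O (KI α X) (KI α Y) = 0 := by rw [hθ0] at hl; linarith
      have hprod : KI α X * KI α Y = 0 := (hO0 _ (hKmem X) _ (hKmem Y)).mp hc0
      rcases mul_eq_zero.mp hprod with hx | hy
      · have hXh : X.hi = 0 := (hK0 X).mp hx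
        have hXl : X.lo = 0 := le_antisymm (hXh ▸ X.lo_le_hi) X.lo_mem.1
        constructor
        · rw [hXl]; ring
        · rw [hXh]; ring
      · have hYh : Y.hi = 0 := (hK0 Y).mp hy
        have hYl : Y.lo = 0 := le_antisymm (hYh ▸ Y.lo_le_hi) Y.lo_mem.1
        constructor
        · rw [hYl]; ring
        · rw [hYh]; ring
    · rintro ⟨_, hhh⟩
      have hKz : KI α X * KI α Y = 0 := by
        rcases mul_eq_zero.mp hhh with hx | hy
        · rw [(hK0 X).mpr hx]; ring
        · rw [(hK0 Y).mpr hy]; ring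
      have hc0 : O (KI α X) (KI α Y) = 0 := (hO0 _ (hKmem X) _ (hKmem Y)).mpr hKz
      have hθ0 : θ X Y = 0 := by
        have h1 := (hθle X Y).trans (min_le_left _ _)
        have h2 := (hθmem X Y).1
        rw [hc0] at h1
        linarith
      constructor
      · rw [h.1, hθeq X Y, hc0, hθ0]; ring
      · rw [h.2, hθeq X Y, hc0, hθ0]; ring
  · -- one characterization
    intro X Y
    have h := hIOw X Y
    constructor
    · rintro ⟨hl, hh⟩
      rw [h.1, hθeq X Y] at hl; rw [h.2, hθeq X Y] at hh
      have hθ0 : θ X Y = 0 := by linarith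
      have hc1 : O (KI α X) (KI α Y) = 1 := by rw [hθ0] at hl; linarith
      have hprod : KI α X * KI α Y = 1 := (hO1 _ (hKmem X) _ (hKmem Y)).mp hc1
      have hx1 : KI α X = 1 := by
        have h1 := hKmem X; have h2 := hKmem Y
        simp only [Set.mem_Icc] at h1 h2
        nlinarith [h1.1, h1.2, h2.1, h2.2]
      have hy1 : KI α Y = 1 := by
        have h1 := hKmem X; have h2 := hKmem Y
        simp only [Set.mem_Icc] at h1 h2
        nlinarith [h1.1, h1.2, h2.1, h2.2]
      obtain ⟨hXl, hXh⟩ := (hK1 X).mp hx1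
      obtain ⟨hYl, hYh⟩ := (hK1 Y).mp hy1
      rw [hXl, hXh, hYl, hYh]
      norm_num
    · rintro ⟨hll, hhh⟩
      have hXl1 : X.lo = 1 := by nlinarith [X.lo_mem.1, X.lo_mem.2, Y.lo_mem.1, Y.lo_mem.2]
      have hYl1 : Y.lo = 1 := by nlinarith [X.lo_mem.1, X.lo_mem.2, Y.lo_mem.1, Y.lo_mem.2]
      have hXh1 : X.hi = 1 := le_antisymm X.hi_mem.2 (hXl1 ▸ X.lo_le_hi)
      have hYh1 : Y.hi = 1 := le_antisymm Y.hi_mem.2 (hYl1 ▸ Y.lo_le_hi)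
      have hKx : KI α X = 1 := (hK1 X).mpr ⟨hXl1, hXh1⟩
      have hKy : KI α Y = 1 := (hK1 Y).mpr ⟨hYl1, hYh1⟩
      have hc1 : O (KI α X) (KI α Y) = 1 := by
        apply (hO1 _ (hKmem X) _ (hKmem Y)).mpr
        rw [hKx, hKy]; ring
      have hθ0 : θ X Y = 0 := by
        have h1 := (hθle X Y).trans (min_le_right _ _)
        have h2 := (hθmem X Y).1
        rw [hc1] at h1
        linarith
      constructor
      · rw [h.1, hθeq X Y, hc1, hθ0]; ring
      · rw [h.2, hθeq X Y, hc1, hθ0]; ring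
  · -- monotonicity
    intro X₁ X₂ Y₁ Y₂ hX hY
    have hKX : KI α X₁ ≤ KI α X₂ := by
      rcases hX with h | ⟨h, _⟩
      · exact le_of_lt h
      · exact le_of_eq h
    have hKY : KI α Y₁ ≤ KI α Y₂ := by
      rcases hY with h | ⟨h, _⟩
      · exact le_of_lt h
      · exact le_of_eq h
    have hc : O (KI α X₁) (KI α Y₁) ≤ O (KI α X₂) (KI α Y₂) :=
      hOi _ (hKmem X₁) _ (hKmem X₂) _ (hKmem Y₁) _ (hKmem Y₂) hKX hKY
    have hKIout : ∀ X Y : IV, KI α (IOw X Y) = O (KI α X) (KI α Y) := by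
      intro X Y
      have h := hIOw X Y
      have hr : KI α (IOw X Y) = (IOw X Y).lo + α * ((IOw X Y).hi - (IOw X Y).lo) := rfl
      rw [hr, h.1, h.2]; ring
    have hKβout : ∀ X Y : IV,
        KI β (IOw X Y) = O (KI α X) (KI α Y) + (β - α) * θ X Y := by
      intro X Y
      have h := hIOw X Y
      have hr : KI β (IOw X Y) = (IOw X Y).lo + β * ((IOw X Y).hi - (IOw X Y).lo) := rfl
      rw [hr, h.1, h.2, hθeq X Y]; ring
    rcases lt_or_eq_of_le hc with hlt | heq
    · left
      rw [hKIout, hKIout]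
      exact hlt
    · right
      refine ⟨by rw [hKIout, hKIout]; exact heq, ?_⟩
      rw [hKβout, hKβout, heq]
      have key : (β - α) * θ X₁ Y₁ ≤ (β - α) * θ X₂ Y₂ := by
        have hc01 := hcmem X₁ Y₁
        rcases eq_or_lt_of_le hc01.1 with hc0 | hcpos
        · -- c = 0 : both θ vanish
          have hθ1 : θ X₁ Y₁ = 0 := by
            have h1 := (hθle X₁ Y₁).trans (min_le_left _ _)
            linarith [(hθmem X₁ Y₁).1]
          have hθ2 : θ X₂ Y₂ = 0 := by
            have h1 := (hθle X₂ Y₂).trans (min_le_left _ _)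
            rw [← heq] at h1
            linarith [(hθmem X₂ Y₂).1]
          rw [hθ1, hθ2]
        rcases eq_or_lt_of_le hc01.2 with hc1 | hclt
        · -- c = 1 : both θ vanish
          have hθ1 : θ X₁ Y₁ = 0 := by
            have h1 := (hθle X₁ Y₁).trans (min_le_right _ _)
            rw [hc1] at h1
            linarith [(hθmem X₁ Y₁).1]
          have hθ2 : θ X₂ Y₂ = 0 := by
            have h1 := (hθle X₂ Y₂).trans (min_le_right _ _)
            rw [← heq, hc1] at h1
            linarith [(hθmem X₂ Y₂).1]
          rw [hθ1, hθ2]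
        -- 0 < c < 1 : strictness forces K_α values to be equal
        have hprod1 : KI α X₁ * KI α Y₁ ≠ 0 := by
          intro hz
          have := (hO0 _ (hKmem X₁) _ (hKmem Y₁)).mpr hz
          linarith
        have hprod2 : KI α X₂ * KI α Y₂ ≠ 0 := by
          intro hz
          have := (hO0 _ (hKmem X₂) _ (hKmem Y₂)).mpr hz
          rw [← heq] at this
          linarith
        have hX1p : KI α X₁ ∈ Set.Ioc (0:ℝ) 1 := by
          have h1 := hKmem X₁
          refine ⟨lt_of_le_of_ne h1.1 ?_, h1.2⟩
          intro h; exact hprod1 (by rw [← h]; ring)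
        have hY1p : KI α Y₁ ∈ Set.Ioc (0:ℝ) 1 := by
          have h1 := hKmem Y₁
          refine ⟨lt_of_le_of_ne h1.1 ?_, h1.2⟩
          intro h; exact hprod1 (by rw [← h]; ring)
        have hX2p : KI α X₂ ∈ Set.Ioc (0:ℝ) 1 := by
          have h1 := hKmem X₂
          refine ⟨lt_of_le_of_ne h1.1 ?_, h1.2⟩
          intro h; exact hprod2 (by rw [← h]; ring)
        have hY2p : KI α Y₂ ∈ Set.Ioc (0:ℝ) 1 := by
          have h1 := hKmem Y₂
          refine ⟨lt_of_le_of_ne h1.1 ?_, h1.2⟩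
          intro h; exact hprod2 (by rw [← h]; ring)
        have hKXeq : KI α X₁ = KI α X₂ := by
          rcases lt_or_eq_of_le hKX with h | h
          · exfalso
            have hs := (hOs _ hX1p _ hX2p _ hY1p).mp h
            have hmono : O (KI α X₂) (KI α Y₁) ≤ O (KI α X₂) (KI α Y₂) :=
              hOi _ (hKmem X₂) _ (hKmem X₂) _ (hKmem Y₁) _ (hKmem Y₂) le_rfl hKY
            rw [← heq] at hmono
            linarith
          · exact h
        have hKYeq : KI α Y₁ = KI α Y₂ := by
          rcases lt_or_eq_of_le hKY with h | h
          · exfalso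
            have hs := (hOs _ hY1p _ hY2p _ hX2p).mp h
            have hmono : O (KI α X₁) (KI α Y₁) ≤ O (KI α X₂) (KI α Y₁) :=
              hOi _ (hKmem X₁) _ (hKmem X₂) _ (hKmem Y₁) _ (hKmem Y₁) hKX le_rfl
            have he1 : O (KI α Y₁) (KI α X₂) = O (KI α X₂) (KI α Y₁) :=
              hOc _ (hKmem Y₁) _ (hKmem X₂)
            have he2 : O (KI α Y₂) (KI α X₂) = O (KI α X₂) (KI α Y₂) :=
              hOc _ (hKmem Y₂) _ (hKmem X₂)
            rw [he1, he2, ← heq] at hs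
            linarith
          · exact h
        -- from the lexicographic order, (β-α)-scaled widths are ordered
        have hKβw : ∀ X : IV, KI β X = KI α X + (β - α) * X.w := by
          intro X; unfold KI IV.w; ring
        have hwX : (β - α) * X₁.w ≤ (β - α) * X₂.w := by
          rcases hX with h | ⟨_, h⟩
          · exact absurd hKXeq (ne_of_lt h)
          · rw [hKβw, hKβw, hKXeq] at h
            linarith
        have hwY : (β - α) * Y₁.w ≤ (β - α) * Y₂.w := by
          rcases hY with h | ⟨_, h⟩
          · exact absurd hKYeq (ne_of_lt h)
          · rw [hKβw, hKβw, hKYeq] at h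
            linarith
        rcases lt_or_gt_of_ne hne with hab | hab
        · -- α < β
          have hba : (0:ℝ) < β - α := by linarith
          have hw1 : X₁.w ≤ X₂.w := le_of_mul_le_mul_left (by linarith [hwX]) hba
          have hw2 : Y₁.w ≤ Y₂.w := le_of_mul_le_mul_left (by linarith [hwY]) hba
          have hBin : B X₁.w Y₁.w ≤ B X₂.w Y₂.w :=
            hBi _ (hwmem X₁) _ (hwmem X₂) _ (hwmem Y₁) _ (hwmem Y₂) hw1 hw2
          have hθθ : θ X₁ Y₁ ≤ θ X₂ Y₂ := by
            simp only [hθdef]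
            rw [← heq]
            exact hBi _ (hBm _ (hwmem X₁) _ (hwmem Y₁)) _ (hBm _ (hwmem X₂) _ (hwmem Y₂))
              _ (hBm _ hc01 _ (h1cmem X₁ Y₁)) _ (hBm _ hc01 _ (h1cmem X₁ Y₁))
              hBin le_rfl
          nlinarith [hθθ]
        · -- β < α
          have hba : (0:ℝ) < α - β := by linarith
          have hw1 : X₂.w ≤ X₁.w := by nlinarith [hwX]
          have hw2 : Y₂.w ≤ Y₁.w := by nlinarith [hwY]
          have hBin : B X₂.w Y₂.w ≤ B X₁.w Y₁.w :=
            hBi _ (hwmem X₂) _ (hwmem X₁) _ (hwmem Y₂) _ (hwmem Y₁) hw1 hw2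
          have hθθ : θ X₂ Y₂ ≤ θ X₁ Y₁ := by
            simp only [hθdef]
            rw [← heq]
            exact hBi _ (hBm _ (hwmem X₂) _ (hwmem Y₂)) _ (hBm _ (hwmem X₁) _ (hwmem Y₁))
              _ (hBm _ hc01 _ (h1cmem X₁ Y₁)) _ (hBm _ hc01 _ (h1cmem X₁ Y₁))
              hBin le_rfl
          nlinarith [hθθ]
      linarith [key]
  · -- width limitation
    intro X Y
    rw [hwidth]
    exact hθleB X Y
end
end

section
/- Let O : [0,1]² → [0,1] be a strict overlap function, B : [0,1]² → [0,1] a commutative aggregation function, α ∈ (0,1) and β ∈ [0,1] with α ≠ β. Let IF_{O,B}^α : L([0,1])² → L([0,1]) be the interval-valued function whose value at (X,Y) is the unique interval R with K_α(R) = O(K_α(X), K_α(Y)) and λ_α(R) = B(λ_α(X), λ_α(Y)), and let m(X,Y) = min{w(IF_{O,B}^α(X,Y)), B(w(X), w(Y))}. Define IOw_B^α : L([0,1])² → L([0,1]) by letting IOw_B^α(X,Y) be the interval R with K_α(R) = O(K_α(X), K_α(Y)) and w(R) = m(X,Y). Then IOw_B^α is a width-limited interval-valued overlap function with respect to the tuple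 (≤_{α,β}, ≤_{α,β}, B). -/
open Set

noncomputable section

/-! The pair `(K_α(X), w(X))` determines `X`. The `K_α`-component of `IOw` is `O(K_α X, K_α Y)`,
which gives commutativity and the boundary conditions, since for `α ∈ (0,1)` we have
`K_α(X) = 0 ↔ X = [0,0]` and `K_α(X) = 1 ↔ X = [1,1]`. For monotonicity, if the two `O`-values
agree then strictness of `O` forces the `K_α`-values of the arguments to agree, and `≤_{α,β}`
compares widths in the direction of the sign of `β - α`. The width of `IOw` is increasing in the
widths of its arguments, because at fixed `K_α` the ratio `λ_α` is increasing in the width. -/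

lemma IV.w_mem_s18 (X : IV) : X.w ∈ Icc (0:ℝ) 1 := by
  unfold IV.w
  constructor <;> linarith [X.lo_le_hi, X.hi_mem.2, X.lo_mem.1]

lemma KI_mem {α : ℝ} (hα : α ∈ Icc (0:ℝ) 1) (X : IV) : KI α X ∈ Icc (0:ℝ) 1 := by
  unfold KI
  constructor <;> nlinarith [X.lo_mem.1, X.hi_mem.2, X.lo_le_hi, hα.1, hα.2]

lemma KI_eq_add_mul_w (α β : ℝ) (X : IV) : KI β X = KI α X + (β - α) * X.w := by
  unfold KI IV.w; ring

lemma IV.eq_of_KI_eq_of_w_eq {α : ℝ} {X Y : IV} (hK : KI α X = KI α Y) (hw : X.w = Y.w) :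
    X = Y := by
  obtain ⟨a, b, _, _, _⟩ := X
  obtain ⟨c, d, _, _, _⟩ := Y
  unfold KI at hK
  unfold IV.w at hw
  dsimp only at hK hw
  obtain rfl : a = c := by rw [hw] at hK; linarith
  obtain rfl : b = d := by linarith
  rfl

lemma KI_eq_zero_iff {α : ℝ} (hα : α ∈ Ioo (0:ℝ) 1) (X : IV) :
    KI α X = 0 ↔ X.lo = 0 ∧ X.hi = 0 := by
  unfold KI
  constructor
  · intro h
    constructor <;> nlinarith [X.lo_mem.1, X.lo_le_hi, hα.1, hα.2]
  · rintro ⟨hlo, hhi⟩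
    rw [hlo, hhi]; ring

lemma KI_eq_one_iff {α : ℝ} (hα : α ∈ Ioo (0:ℝ) 1) (X : IV) :
    KI α X = 1 ↔ X.lo = 1 ∧ X.hi = 1 := by
  unfold KI
  constructor
  · intro h
    constructor <;> nlinarith [X.hi_mem.2, X.lo_le_hi, hα.1, hα.2]
  · rintro ⟨hlo, hhi⟩
    rw [hlo, hhi]; ring

lemma IV.w_eq_zero_of_KI_eq_zero {α : ℝ} (hα : α ∈ Ioo (0:ℝ) 1) {X : IV} (h : KI α X = 0) :
    X.w = 0 := by
  obtain ⟨hlo, hhi⟩ := (KI_eq_zero_iff hα X).mp h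
  rw [IV.w, hlo, hhi, sub_self]

lemma IV.w_eq_zero_of_KI_eq_one {α : ℝ} (hα : α ∈ Ioo (0:ℝ) 1) {X : IV} (h : KI α X = 1) :
    X.w = 0 := by
  obtain ⟨hlo, hhi⟩ := (KI_eq_one_iff hα X).mp h
  rw [IV.w, hlo, hhi, sub_self]

lemma mul_eq_one_iff_of_mem_Icc {a b : ℝ} (ha : a ∈ Icc (0:ℝ) 1) (hb : b ∈ Icc (0:ℝ) 1) :
    a * b = 1 ↔ a = 1 ∧ b = 1 := by
  constructor
  · intro h
    constructor <;> nlinarith [ha.1, ha.2, hb.1, hb.2]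
  · rintro ⟨rfl, rfl⟩
    exact mul_one 1

lemma KI_mul_KI_eq_zero_iff {α : ℝ} (hα : α ∈ Ioo (0:ℝ) 1) (X Y : IV) :
    KI α X * KI α Y = 0 ↔ X.lo * Y.lo = 0 ∧ X.hi * Y.hi = 0 := by
  rw [mul_eq_zero, KI_eq_zero_iff hα, KI_eq_zero_iff hα]
  constructor
  · rintro (⟨hlo, hhi⟩ | ⟨hlo, hhi⟩) <;> simp [hlo, hhi]
  · rintro ⟨-, hhi⟩
    rcases mul_eq_zero.mp hhi with hX | hY
    · exact Or.inl ⟨le_antisymm (hX ▸ X.lo_le_hi) X.lo_mem.1, hX⟩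
    · exact Or.inr ⟨le_antisymm (hY ▸ Y.lo_le_hi) Y.lo_mem.1, hY⟩

lemma KI_mul_KI_eq_one_iff {α : ℝ} (hα : α ∈ Ioo (0:ℝ) 1) (X Y : IV) :
    KI α X * KI α Y = 1 ↔ X.lo * Y.lo = 1 ∧ X.hi * Y.hi = 1 := by
  have hαI := mem_Icc_of_Ioo hα
  rw [mul_eq_one_iff_of_mem_Icc (KI_mem hαI X) (KI_mem hαI Y), KI_eq_one_iff hα,
    KI_eq_one_iff hα, mul_eq_one_iff_of_mem_Icc X.lo_mem Y.lo_mem,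
    mul_eq_one_iff_of_mem_Icc X.hi_mem Y.hi_mem]
  tauto

lemma dmax_nonneg {α c : ℝ} (hα : α ∈ Ioo (0:ℝ) 1) (hc : c ∈ Icc (0:ℝ) 1) : 0 ≤ dmax α c :=
  le_min (div_nonneg hc.1 hα.1.le) (div_nonneg (by linarith [hc.2]) (by linarith [hα.2]))

lemma IV.w_le_dmax {α : ℝ} (hα : α ∈ Ioo (0:ℝ) 1) (X : IV) : X.w ≤ dmax α (KI α X) := by
  unfold dmax KI IV.w
  refine le_min ?_ ?_
  · rw [le_div_iff₀ hα.1]; nlinarith [X.lo_mem.1]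
  · rw [le_div_iff₀ (by linarith [hα.2])]; nlinarith [X.hi_mem.2]

lemma IV.w_eq_zero_of_dmax_eq_zero {α : ℝ} (hα : α ∈ Ioo (0:ℝ) 1) {X : IV}
    (hd : dmax α (KI α X) = 0) : X.w = 0 := by
  unfold dmax at hd
  rcases min_choice (KI α X / α) ((1 - KI α X) / (1 - α)) with h | h <;> rw [h] at hd
  · exact X.w_eq_zero_of_KI_eq_zero hα ((div_eq_zero_iff.mp hd).resolve_right hα.1.ne')
  · refine X.w_eq_zero_of_KI_eq_one hα ?_
    have := (div_eq_zero_iff.mp hd).resolve_right (by linarith [hα.2])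
    linarith

lemma lam_mem {α : ℝ} (hα : α ∈ Ioo (0:ℝ) 1) (X : IV) : lam α X ∈ Icc (0:ℝ) 1 := by
  unfold lam
  split_ifs with hd
  · exact ⟨zero_le_one, le_rfl⟩
  · have hpos := (dmax_nonneg hα (KI_mem (mem_Icc_of_Ioo hα) X)).lt_of_ne' hd
    exact ⟨div_nonneg X.w_mem_s18.1 hpos.le, (div_le_one hpos).mpr (X.w_le_dmax hα)⟩

lemma lam_le_lam_iff {α : ℝ} (hα : α ∈ Ioo (0:ℝ) 1) {X Y : IV} (hK : KI α X = KI α Y) :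
    lam α X ≤ lam α Y ↔ X.w ≤ Y.w := by
  unfold lam
  rw [hK]
  split_ifs with hd
  · rw [X.w_eq_zero_of_dmax_eq_zero hα (hK ▸ hd), Y.w_eq_zero_of_dmax_eq_zero hα hd]
    exact iff_of_true le_rfl le_rfl
  · exact div_le_div_iff_of_pos_right
      ((dmax_nonneg hα (KI_mem (mem_Icc_of_Ioo hα) Y)).lt_of_ne' hd)

lemma IsStrictOverlap.eq_and_eq_of_apply_eq {O : ℝ → ℝ → ℝ} (hO : IsStrictOverlap O)
    {x₁ x₂ y₁ y₂ : ℝ} (hx₁ : x₁ ∈ Icc (0:ℝ) 1) (hx₂ : x₂ ∈ Icc (0:ℝ) 1)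
    (hy₁ : y₁ ∈ Icc (0:ℝ) 1) (hy₂ : y₂ ∈ Icc (0:ℝ) 1) (hx : x₁ ≤ x₂) (hy : y₁ ≤ y₂)
    (heq : O x₁ y₁ = O x₂ y₂) (hne : O x₁ y₁ ≠ 0) : x₁ = x₂ ∧ y₁ = y₂ := by
  obtain ⟨⟨-, hcomm, hzero, -, hmono, -⟩, hstrict⟩ := hO
  have hxy : x₁ * y₁ ≠ 0 := mt (hzero _ hx₁ _ hy₁).mpr hne
  have hx₁pos : 0 < x₁ := hx₁.1.lt_of_ne' (left_ne_zero_of_mul hxy)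
  have hy₁pos : 0 < y₁ := hy₁.1.lt_of_ne' (right_ne_zero_of_mul hxy)
  have hx₂pos : 0 < x₂ := hx₁pos.trans_le hx
  have hy₂pos : 0 < y₂ := hy₁pos.trans_le hy
  have hleft : O x₁ y₁ ≤ O x₂ y₁ := hmono _ hx₁ _ hx₂ _ hy₁ _ hy₁ hx le_rfl
  have hright : O x₂ y₁ ≤ O x₂ y₂ := hmono _ hx₂ _ hx₂ _ hy₁ _ hy₂ le_rfl hy
  constructor
  · refine hx.eq_of_not_lt fun hlt => ?_
    have := (hstrict _ ⟨hx₁pos, hx₁.2⟩ _ ⟨hx₂pos, hx₂.2⟩ _ ⟨hy₁pos, hy₁.2⟩).mp hlt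
    linarith
  · refine hy.eq_of_not_lt fun hlt => ?_
    have := (hstrict _ ⟨hy₁pos, hy₁.2⟩ _ ⟨hy₂pos, hy₂.2⟩ _ ⟨hx₂pos, hx₂.2⟩).mp hlt
    rw [hcomm _ hy₁ _ hx₂, hcomm _ hy₂ _ hx₂] at this
    linarith

section leAB

variable {α β : ℝ} {X Y : IV}

lemma leAB.KI_le (h : leAB α β X Y) : KI α X ≤ KI α Y :=
  h.elim le_of_lt fun h => h.1.le

lemma leAB.mul_w_le (h : leAB α β X Y) (hK : KI α X = KI α Y) :
    (β - α) * X.w ≤ (β - α) * Y.w := by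
  have hβ := (h.resolve_left hK.not_lt).2
  rw [KI_eq_add_mul_w α β X, KI_eq_add_mul_w α β Y, hK] at hβ
  linarith

lemma leAB_of_KI_eq (hK : KI α X = KI α Y) (hw : (β - α) * X.w ≤ (β - α) * Y.w) :
    leAB α β X Y := by
  right
  refine ⟨hK, ?_⟩
  rw [KI_eq_add_mul_w α β X, KI_eq_add_mul_w α β Y, hK]
  linarith

end leAB

section IOw

variable {O B : ℝ → ℝ → ℝ} {α : ℝ} {IF IOw : IV → IV → IV}

lemma IF_comm (hO : IsOverlap O)
    (hBc : ∀ x ∈ Icc (0:ℝ) 1, ∀ y ∈ Icc (0:ℝ) 1, B x y = B y x) (hα : α ∈ Ioo (0:ℝ) 1)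
    (hIF : ∀ X Y : IV,
      KI α (IF X Y) = O (KI α X) (KI α Y) ∧ lam α (IF X Y) = B (lam α X) (lam α Y))
    (X Y : IV) : IF X Y = IF Y X := by
  have hαI := mem_Icc_of_Ioo hα
  have hK : KI α (IF X Y) = KI α (IF Y X) := by
    rw [(hIF X Y).1, (hIF Y X).1, hO.2.1 _ (KI_mem hαI X) _ (KI_mem hαI Y)]
  have hlam : lam α (IF X Y) = lam α (IF Y X) := by
    rw [(hIF X Y).2, (hIF Y X).2, hBc _ (lam_mem hα X) _ (lam_mem hα Y)]
  refine IV.eq_of_KI_eq_of_w_eq hK (le_antisymm ?_ ?_)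
  · exact (lam_le_lam_iff hα hK).mp hlam.le
  · exact (lam_le_lam_iff hα hK.symm).mp hlam.ge

lemma IOw_comm (hO : IsOverlap O)
    (hBc : ∀ x ∈ Icc (0:ℝ) 1, ∀ y ∈ Icc (0:ℝ) 1, B x y = B y x) (hα : α ∈ Ioo (0:ℝ) 1)
    (hIF : ∀ X Y : IV,
      KI α (IF X Y) = O (KI α X) (KI α Y) ∧ lam α (IF X Y) = B (lam α X) (lam α Y))
    (hIOw : ∀ X Y : IV,
      KI α (IOw X Y) = O (KI α X) (KI α Y) ∧ (IOw X Y).w = min (IF X Y).w (B X.w Y.w))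
    (X Y : IV) : IOw X Y = IOw Y X := by
  have hαI := mem_Icc_of_Ioo hα
  refine IV.eq_of_KI_eq_of_w_eq (α := α) ?_ ?_
  · rw [(hIOw X Y).1, (hIOw Y X).1, hO.2.1 _ (KI_mem hαI X) _ (KI_mem hαI Y)]
  · rw [(hIOw X Y).2, (hIOw Y X).2, IF_comm hO hBc hα hIF, hBc _ X.w_mem_s18 _ Y.w_mem_s18]

lemma IOw_eq_zero_iff (hO : IsOverlap O) (hα : α ∈ Ioo (0:ℝ) 1)
    (hIOw : ∀ X Y : IV, KI α (IOw X Y) = O (KI α X) (KI α Y)) (X Y : IV) :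
    ((IOw X Y).lo = 0 ∧ (IOw X Y).hi = 0) ↔ (X.lo * Y.lo = 0 ∧ X.hi * Y.hi = 0) := by
  have hαI := mem_Icc_of_Ioo hα
  rw [← KI_eq_zero_iff hα, hIOw, hO.2.2.1 _ (KI_mem hαI X) _ (KI_mem hαI Y),
    KI_mul_KI_eq_zero_iff hα]

lemma IOw_eq_one_iff (hO : IsOverlap O) (hα : α ∈ Ioo (0:ℝ) 1)
    (hIOw : ∀ X Y : IV, KI α (IOw X Y) = O (KI α X) (KI α Y)) (X Y : IV) :
    ((IOw X Y).lo = 1 ∧ (IOw X Y).hi = 1) ↔ (X.lo * Y.lo = 1 ∧ X.hi * Y.hi = 1) := by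
  have hαI := mem_Icc_of_Ioo hα
  rw [← KI_eq_one_iff hα, hIOw, hO.2.2.2.1 _ (KI_mem hαI X) _ (KI_mem hαI Y),
    KI_mul_KI_eq_one_iff hα]

variable {X₁ X₂ Y₁ Y₂ : IV}

lemma w_IF_le (hB : IncrIcc B) (hα : α ∈ Ioo (0:ℝ) 1)
    (hIF : ∀ X Y : IV,
      KI α (IF X Y) = O (KI α X) (KI α Y) ∧ lam α (IF X Y) = B (lam α X) (lam α Y))
    (hKX : KI α X₁ = KI α X₂) (hKY : KI α Y₁ = KI α Y₂) (hwX : X₁.w ≤ X₂.w)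
    (hwY : Y₁.w ≤ Y₂.w) : (IF X₁ Y₁).w ≤ (IF X₂ Y₂).w := by
  have hK : KI α (IF X₁ Y₁) = KI α (IF X₂ Y₂) := by
    rw [(hIF X₁ Y₁).1, (hIF X₂ Y₂).1, hKX, hKY]
  rw [← lam_le_lam_iff hα hK, (hIF X₁ Y₁).2, (hIF X₂ Y₂).2]
  exact hB _ (lam_mem hα X₁) _ (lam_mem hα X₂) _ (lam_mem hα Y₁) _ (lam_mem hα Y₂)
    ((lam_le_lam_iff hα hKX).mpr hwX) ((lam_le_lam_iff hα hKY).mpr hwY)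

lemma w_IOw_le (hB : IncrIcc B) (hα : α ∈ Ioo (0:ℝ) 1)
    (hIF : ∀ X Y : IV,
      KI α (IF X Y) = O (KI α X) (KI α Y) ∧ lam α (IF X Y) = B (lam α X) (lam α Y))
    (hIOw : ∀ X Y : IV, (IOw X Y).w = min (IF X Y).w (B X.w Y.w))
    (hKX : KI α X₁ = KI α X₂) (hKY : KI α Y₁ = KI α Y₂) (hwX : X₁.w ≤ X₂.w)
    (hwY : Y₁.w ≤ Y₂.w) : (IOw X₁ Y₁).w ≤ (IOw X₂ Y₂).w := by
  rw [hIOw, hIOw]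
  exact min_le_min (w_IF_le hB hα hIF hKX hKY hwX hwY)
    (hB _ X₁.w_mem_s18 _ X₂.w_mem_s18 _ Y₁.w_mem_s18 _ Y₂.w_mem_s18 hwX hwY)

lemma mul_w_IOw_le (hB : IncrIcc B) (hα : α ∈ Ioo (0:ℝ) 1)
    (hIF : ∀ X Y : IV,
      KI α (IF X Y) = O (KI α X) (KI α Y) ∧ lam α (IF X Y) = B (lam α X) (lam α Y))
    (hIOw : ∀ X Y : IV, (IOw X Y).w = min (IF X Y).w (B X.w Y.w))
    (hKX : KI α X₁ = KI α X₂) (hKY : KI α Y₁ = KI α Y₂) {s : ℝ} (hwX : s * X₁.w ≤ s * X₂.w)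
    (hwY : s * Y₁.w ≤ s * Y₂.w) : s * (IOw X₁ Y₁).w ≤ s * (IOw X₂ Y₂).w := by
  rcases lt_trichotomy s 0 with hs | rfl | hs
  · rw [mul_le_mul_left_of_neg hs] at hwX hwY ⊢
    exact w_IOw_le hB hα hIF hIOw hKX.symm hKY.symm hwX hwY
  · simp
  · rw [mul_le_mul_iff_right₀ hs] at hwX hwY ⊢
    exact w_IOw_le hB hα hIF hIOw hKX hKY hwX hwY

lemma IOw_mono (hO : IsStrictOverlap O) (hB : IncrIcc B) (hα : α ∈ Ioo (0:ℝ) 1) (β : ℝ)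
    (hIF : ∀ X Y : IV,
      KI α (IF X Y) = O (KI α X) (KI α Y) ∧ lam α (IF X Y) = B (lam α X) (lam α Y))
    (hIOw : ∀ X Y : IV,
      KI α (IOw X Y) = O (KI α X) (KI α Y) ∧ (IOw X Y).w = min (IF X Y).w (B X.w Y.w))
    (hX : leAB α β X₁ X₂) (hY : leAB α β Y₁ Y₂) : leAB α β (IOw X₁ Y₁) (IOw X₂ Y₂) := by
  have hαI := mem_Icc_of_Ioo hα
  have hKI := fun X => KI_mem hαI X
  have hle : O (KI α X₁) (KI α Y₁) ≤ O (KI α X₂) (KI α Y₂) :=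
    hO.1.2.2.2.2.1 _ (hKI X₁) _ (hKI X₂) _ (hKI Y₁) _ (hKI Y₂) hX.KI_le hY.KI_le
  rcases hle.lt_or_eq with hlt | heq
  · left
    rwa [(hIOw X₁ Y₁).1, (hIOw X₂ Y₂).1]
  by_cases h0 : O (KI α X₁) (KI α Y₁) = 0
  · have h₁ : KI α (IOw X₁ Y₁) = 0 := by rw [(hIOw X₁ Y₁).1, h0]
    have h₂ : KI α (IOw X₂ Y₂) = 0 := by rw [(hIOw X₂ Y₂).1, ← heq, h0]
    refine leAB_of_KI_eq (h₁.trans h₂.symm) ?_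
    rw [IV.w_eq_zero_of_KI_eq_zero hα h₁, IV.w_eq_zero_of_KI_eq_zero hα h₂]
  obtain ⟨hKX, hKY⟩ := hO.eq_and_eq_of_apply_eq (hKI X₁) (hKI X₂) (hKI Y₁) (hKI Y₂)
    hX.KI_le hY.KI_le heq h0
  refine leAB_of_KI_eq (by rw [(hIOw X₁ Y₁).1, (hIOw X₂ Y₂).1, hKX, hKY]) ?_
  exact mul_w_IOw_le hB hα hIF (fun X Y => (hIOw X Y).2) hKX hKY (hX.mul_w_le hKX)
    (hY.mul_w_le hKY)

end IOw

theorem statement18_general (O B : ℝ → ℝ → ℝ) (hO : IsStrictOverlap O)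
    (hB : IsAggregation B)
    (hBc : ∀ x ∈ Set.Icc (0:ℝ) 1, ∀ y ∈ Set.Icc (0:ℝ) 1, B x y = B y x)
    (α β : ℝ) (hα : α ∈ Set.Ioo (0:ℝ) 1)
    (IF : IV → IV → IV)
    (hIF : ∀ X Y : IV,
      KI α (IF X Y) = O (KI α X) (KI α Y) ∧ lam α (IF X Y) = B (lam α X) (lam α Y))
    (IOw : IV → IV → IV)
    (hIOw : ∀ X Y : IV,
      KI α (IOw X Y) = O (KI α X) (KI α Y) ∧
      (IOw X Y).w = min (IF X Y).w (B X.w Y.w)) :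
    IsWIVOverlap IOw (leAB α β) (leAB α β) B :=
  ⟨IOw_comm hO.1 hBc hα hIF hIOw,
    IOw_eq_zero_iff hO.1 hα (fun X Y => (hIOw X Y).1),
    IOw_eq_one_iff hO.1 hα (fun X Y => (hIOw X Y).1),
    fun _ _ _ _ => IOw_mono hO hB.2.1 hα β hIF hIOw,
    fun X Y => (hIOw X Y).2 ▸ min_le_right _ _⟩

theorem statement18 (O B : ℝ → ℝ → ℝ) (hO : IsStrictOverlap O)
    (hB : IsAggregation B)
    (hBc : ∀ x ∈ Set.Icc (0:ℝ) 1, ∀ y ∈ Set.Icc (0:ℝ) 1, B x y = B y x)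
    (α β : ℝ) (hα : α ∈ Set.Ioo (0:ℝ) 1) (hβ : β ∈ Set.Icc (0:ℝ) 1) (hne : α ≠ β)
    (IF : IV → IV → IV)
    (hIF : ∀ X Y : IV,
      KI α (IF X Y) = O (KI α X) (KI α Y) ∧ lam α (IF X Y) = B (lam α X) (lam α Y))
    (IOw : IV → IV → IV)
    (hIOw : ∀ X Y : IV,
      KI α (IOw X Y) = O (KI α X) (KI α Y) ∧
      (IOw X Y).w = min (IF X Y).w (B X.w Y.w)) :
    IsWIVOverlap IOw (leAB α β) (leAB α β) B :=
  statement18_general O B hO hB hBc α β hα IF hIF IOw hIOw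
end
end
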